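/- arXiv:2605.06488 — 5 statements merged into one kernel-verified Lean document; each statement's English description precedes it below -/
import Mathlib

section
/- Let Ψ = Σ − Φ be a Lévy–Khintchine function with ρ its largest zero assumed finite. Then there exists x₁ ∈ (ρ,∞) with ∫_{x₁}^∞ du/Ψ(u) < ∞ if and only if ∫_1^∞ du/Σ(u) < ∞. -/
open MeasureTheory Filter Set Topology

/-- Integrability of the Σ integrand. -/
lemma aux1 (η : Measure ℝ)
    (hη : ∫⁻ u in Ioi (0:ℝ), ENNReal.ofReal (min u (u ^ 2)) ∂η ≠ ⊤)
    {x : ℝ} (hx : 0 ≤ x) :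
    IntegrableOn (fun u => Real.exp (-(u * x)) - 1 + u * x) (Ioi 0) η := by
  have hnn : ∀ u : ℝ, 0 ≤ Real.exp (-(u * x)) - 1 + u * x := fun u => by
    have := Real.add_one_le_exp (-(u * x)); linarith
  constructor
  · exact (((Real.continuous_exp.comp
      (continuous_id.mul continuous_const).neg).sub continuous_const).add
      (continuous_id.mul continuous_const)).aestronglyMeasurable
  · rw [hasFiniteIntegral_iff_ofReal (ae_of_all _ hnn)]
    have hmeas : Measurable fun u : ℝ => ENNReal.ofReal (min u (u ^ 2)) :=
      (measurable_id.min (measurable_id.pow_const 2)).ennreal_ofReal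
    have hb : ∫⁻ u in Ioi (0:ℝ), ENNReal.ofReal (Real.exp (-(u * x)) - 1 + u * x) ∂η
        ≤ ∫⁻ u in Ioi (0:ℝ),
            ENNReal.ofReal (max x (x ^ 2)) * ENNReal.ofReal (min u (u ^ 2)) ∂η := by
      apply setLIntegral_mono (hmeas.const_mul _)
      intro u hu
      rw [← ENNReal.ofReal_mul (le_max_of_le_left hx)]
      apply ENNReal.ofReal_le_ofReal
      have hu0 : (0:ℝ) < u := hu
      rcases le_total u 1 with h | h
      · rw [min_eq_right (by nlinarith : u ^ 2 ≤ u)]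
        have ht : 0 ≤ u * x := mul_nonneg hu0.le hx
        have h1 : Real.exp (-(u * x)) * (1 + u * x) ≤ 1 := by
          have h2 := Real.add_one_le_exp (u * x)
          have h3 : Real.exp (-(u * x)) * (1 + u * x)
              ≤ Real.exp (-(u * x)) * Real.exp (u * x) :=
            mul_le_mul_of_nonneg_left (by linarith) (Real.exp_nonneg _)
          rwa [← Real.exp_add, neg_add_cancel, Real.exp_zero] at h3
        have h4 : x ^ 2 * u ^ 2 ≤ max x (x ^ 2) * u ^ 2 :=
          mul_le_mul_of_nonneg_right (le_max_right _ _) (sq_nonneg u)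
        have h5 : Real.exp (-(u * x)) - 1 + u * x ≤ (u * x) ^ 2 := by
          nlinarith [h1, mul_nonneg (mul_nonneg ht ht) ht]
        nlinarith [h5, h4]
      · rw [min_eq_left (by nlinarith : u ≤ u ^ 2)]
        have h5 : Real.exp (-(u * x)) ≤ 1 := by
          rw [← Real.exp_zero]; exact Real.exp_le_exp.2 (by nlinarith)
        have h6 : x * u ≤ max x (x ^ 2) * u :=
          mul_le_mul_of_nonneg_right (le_max_left _ _) hu0.le
        nlinarith
    refine lt_of_le_of_lt hb ?_
    rw [lintegral_const_mul _ hmeas]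
    exact ENNReal.mul_lt_top ENNReal.ofReal_lt_top (lt_top_iff_ne_top.2 hη)

/-- Integrability of the Φ integrand. -/
lemma aux2 (ν : Measure ℝ)
    (hν : ∫⁻ u in Ioi (0:ℝ), ENNReal.ofReal (min 1 u) ∂ν ≠ ⊤)
    {x : ℝ} (hx : 0 ≤ x) :
    IntegrableOn (fun u => 1 - Real.exp (-(x * u))) (Ioi 0) ν := by
  constructor
  · exact (continuous_const.sub (Real.continuous_exp.comp
      (continuous_const.mul continuous_id).neg)).aestronglyMeasurable
  · rw [hasFiniteIntegral_iff_ofReal ?hnn]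
    case hnn =>
      filter_upwards [ae_restrict_mem measurableSet_Ioi] with u hu
      have hu0 : (0:ℝ) < u := hu
      have : Real.exp (-(x * u)) ≤ 1 := by
        rw [← Real.exp_zero]; exact Real.exp_le_exp.2 (by nlinarith)
      simp only [Pi.zero_apply]
      linarith
    have hmeas : Measurable fun u : ℝ => ENNReal.ofReal (min 1 u) :=
      (measurable_const.min measurable_id).ennreal_ofReal
    have hb : ∫⁻ u in Ioi (0:ℝ), ENNReal.ofReal (1 - Real.exp (-(x * u))) ∂ν
        ≤ ∫⁻ u in Ioi (0:ℝ),
            ENNReal.ofReal (max 1 x) * ENNReal.ofReal (min 1 u) ∂ν := by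
      apply setLIntegral_mono (hmeas.const_mul _)
      intro u hu
      rw [← ENNReal.ofReal_mul (le_max_of_le_left zero_le_one)]
      apply ENNReal.ofReal_le_ofReal
      have hu0 : (0:ℝ) < u := hu
      rcases le_total u 1 with h | h
      · rw [min_eq_right h]
        have h1 := Real.add_one_le_exp (-(x * u))
        have h2 : x * u ≤ max 1 x * u :=
          mul_le_mul_of_nonneg_right (le_max_right _ _) hu0.le
        linarith
      · rw [min_eq_left h]
        have h1 : 0 ≤ Real.exp (-(x * u)) := Real.exp_nonneg _
        have h2 : (1:ℝ) ≤ max 1 x := le_max_left _ _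
        nlinarith
    refine lt_of_le_of_lt hb ?_
    rw [lintegral_const_mul _ hmeas]
    exact ENNReal.mul_lt_top ENNReal.ofReal_lt_top (lt_top_iff_ne_top.2 hν)

/-- Integrability of `min 1 u` against `ν`. -/
lemma auxK (ν : Measure ℝ)
    (hν : ∫⁻ u in Ioi (0:ℝ), ENNReal.ofReal (min 1 u) ∂ν ≠ ⊤) :
    IntegrableOn (fun u => min 1 u) (Ioi 0) ν := by
  constructor
  · exact (continuous_const.min continuous_id).aestronglyMeasurable
  · rw [hasFiniteIntegral_iff_ofReal ?hnn]
    case hnn =>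
      filter_upwards [ae_restrict_mem measurableSet_Ioi] with u hu
      exact le_min zero_le_one (le_of_lt hu)
    exact lt_top_iff_ne_top.2 hν

/-- Monotonicity in `x` of the Σ integrand. -/
lemma auxm {u s t : ℝ} (hu : 0 < u) (hs : 0 ≤ s) (hst : s ≤ t) :
    Real.exp (-(u * s)) - 1 + u * s ≤ Real.exp (-(u * t)) - 1 + u * t := by
  have e1 : Real.exp (-(u * s)) ≤ 1 := by
    rw [← Real.exp_zero]; exact Real.exp_le_exp.2 (by nlinarith)
  have e2 := Real.add_one_le_exp (-(u * (t - s)))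
  have e4 : Real.exp (-(u * (t - s))) ≤ 1 := by
    rw [← Real.exp_zero]; exact Real.exp_le_exp.2 (by nlinarith)
  have e3 : Real.exp (-(u * t)) = Real.exp (-(u * s)) * Real.exp (-(u * (t - s))) := by
    rw [← Real.exp_add]; congr 1; ring
  nlinarith [mul_nonneg (by linarith : (0:ℝ) ≤ 1 - Real.exp (-(u * s)))
    (by linarith : (0:ℝ) ≤ 1 - Real.exp (-(u * (t - s)))),
    Real.exp_nonneg (-(u * s)), Real.exp_nonneg (-(u * (t - s)))]

/-- Convexity (slope) inequality for the Σ integrand. -/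
lemma auxc {u x y : ℝ} (hu : 0 < u) (hx : 0 < x) (hxy : x ≤ y) :
    (Real.exp (-(u * x)) - 1 + u * x) * y ≤ (Real.exp (-(u * y)) - 1 + u * y) * x := by
  have hy : 0 < y := lt_of_lt_of_le hx hxy
  set t := x / y with ht
  have ht0 : 0 ≤ t := by positivity
  have ht1 : t ≤ 1 := (div_le_one hy).2 hxy
  have hty : t * y = x := div_mul_cancel₀ x hy.ne'
  have hconv := convexOn_exp.2 (mem_univ (-(u * y))) (mem_univ (0:ℝ)) ht0
    (by linarith : 0 ≤ 1 - t) (by ring)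
  simp only [smul_eq_mul, mul_zero, add_zero, Real.exp_zero, mul_one] at hconv
  have harg : t * -(u * y) = -(u * x) := by rw [← hty]; ring
  rw [harg] at hconv
  -- hconv : exp (-(u*x)) ≤ t * exp (-(u*y)) + (1 - t)
  have h := mul_le_mul_of_nonneg_left hconv hy.le
  have h2 : y * (t * Real.exp (-(u * y)) + (1 - t))
      = x * Real.exp (-(u * y)) + (y - x) := by
    linear_combination (Real.exp (-(u * y)) - 1) * hty
  rw [h2] at h
  nlinarith [h]

/-- For a Lévy–Khintchine function `Ψ = Σ − Φ` with largest zero `ρ` finite,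
there exists `x₁ ∈ (ρ,∞)` with `∫_{x₁}^∞ du/Ψ(u) < ∞` iff `∫_1^∞ du/Σ(u) < ∞`. -/
theorem stmt2
    (a d b lam : ℝ) (ha : 0 ≤ a) (hd : 0 ≤ d) (hb : 0 ≤ b) (hlam : 0 ≤ lam)
    (η ν : Measure ℝ)
    (hη : ∫⁻ u in Ioi (0:ℝ), ENNReal.ofReal (min u (u ^ 2)) ∂η ≠ ⊤)
    (hν : ∫⁻ u in Ioi (0:ℝ), ENNReal.ofReal (min 1 u) ∂ν ≠ ⊤)
    (Sig Φ Ψ : ℝ → ℝ)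
    (hSig : ∀ x, 0 ≤ x →
      Sig x = a * x ^ 2 + d * x + ∫ u in Ioi (0:ℝ), (Real.exp (-(u * x)) - 1 + u * x) ∂η)
    (hΦ : ∀ x, 0 ≤ x →
      Φ x = b * x + (∫ u in Ioi (0:ℝ), (1 - Real.exp (-(x * u))) ∂ν) + lam)
    (hΨ : ∀ x, Ψ x = Sig x - Φ x)
    (hΨ0 : Ψ 0 ≤ 0)
    (ρ : ℝ)
    (hbdd : BddAbove {x : ℝ | 0 ≤ x ∧ Ψ x ≤ 0})
    (hρ : ρ = sSup {x : ℝ | 0 ≤ x ∧ Ψ x ≤ 0}) :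
    (∃ x₁ : ℝ, ρ < x₁ ∧ IntegrableOn (fun u => 1 / Ψ u) (Ioi x₁)) ↔
      IntegrableOn (fun u => 1 / Sig u) (Ioi 1) := by
  -- basic positivity facts
  have hρ0 : 0 ≤ ρ := by
    rw [hρ]; exact le_csSup hbdd ⟨le_refl 0, hΨ0⟩
  have hΨpos : ∀ u, ρ < u → 0 < Ψ u := by
    intro u hu
    by_contra h
    push_neg at h
    have hum : u ∈ {x : ℝ | 0 ≤ x ∧ Ψ x ≤ 0} := ⟨le_trans hρ0 hu.le, h⟩
    have := le_csSup hbdd hum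
    rw [← hρ] at this
    linarith
  have hΦnonneg : ∀ x : ℝ, 0 ≤ x → 0 ≤ Φ x := by
    intro x hx
    rw [hΦ x hx]
    have h1 : 0 ≤ ∫ u in Ioi (0:ℝ), (1 - Real.exp (-(x * u))) ∂ν := by
      apply setIntegral_nonneg measurableSet_Ioi
      intro u hu
      have hu0 : (0:ℝ) < u := hu
      have : Real.exp (-(x * u)) ≤ 1 := by
        rw [← Real.exp_zero]; exact Real.exp_le_exp.2 (by nlinarith)
      linarith
    have h2 : 0 ≤ b * x := mul_nonneg hb hx
    linarith
  have hI1nonneg : ∀ x : ℝ,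
      0 ≤ ∫ u in Ioi (0:ℝ), (Real.exp (-(u * x)) - 1 + u * x) ∂η := by
    intro x
    apply setIntegral_nonneg measurableSet_Ioi
    intro u _
    have := Real.add_one_le_exp (-(u * x)); linarith
  -- Σ(1) > 0
  have hSig1pos : 0 < Sig 1 := by
    by_contra hle
    push_neg at hle
    have h1 : Sig 1 = a + d + ∫ u in Ioi (0:ℝ), (Real.exp (-(u * 1)) - 1 + u * 1) ∂η := by
      rw [hSig 1 zero_le_one]; ring_nf
    have hI := hI1nonneg 1
    have ha0 : a = 0 := by rw [h1] at hle; linarith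
    have hd0 : d = 0 := by rw [h1] at hle; linarith
    have hIz : ∫ u in Ioi (0:ℝ), (Real.exp (-(u * 1)) - 1 + u * 1) ∂η = 0 := by
      rw [h1] at hle; linarith
    have hae : (fun u => Real.exp (-(u * 1)) - 1 + u * 1)
        =ᵐ[η.restrict (Ioi 0)] 0 := by
      refine (integral_eq_zero_iff_of_nonneg ?_ (aux1 η hη zero_le_one)).1 hIz
      intro u
      have := Real.add_one_le_exp (-(u * 1))
      simp only [Pi.zero_apply]
      linarith
    have hfalse : ∀ᵐ u ∂η.restrict (Ioi 0), False := by
      filter_upwards [hae, ae_restrict_mem measurableSet_Ioi] with u h1' h2'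
      have hu0 : (0:ℝ) < u := h2'
      have hne : -(u * 1) ≠ 0 := by simp; linarith
      have := Real.add_one_lt_exp hne
      simp only [Pi.zero_apply] at h1'
      linarith
    have hres : η.restrict (Ioi 0) = 0 := by
      exact ae_eq_bot.1 (Filter.eventually_false_iff_eq_bot.1 hfalse)

    have hSigzero : ∀ x : ℝ, 0 ≤ x → Sig x = 0 := by
      intro x hx
      rw [hSig x hx, ha0, hd0]
      have : ∫ u in Ioi (0:ℝ), (Real.exp (-(u * x)) - 1 + u * x) ∂η
          = ∫ u, (Real.exp (-(u * x)) - 1 + u * x) ∂(η.restrict (Ioi 0)) := rfl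
      rw [this, hres, integral_zero_measure]
      ring
    obtain ⟨M, hM⟩ := hbdd
    have hmem : max M 0 + 1 ∈ {x : ℝ | 0 ≤ x ∧ Ψ x ≤ 0} := by
      constructor
      · positivity
      · rw [hΨ, hSigzero _ (by positivity)]
        have := hΦnonneg (max M 0 + 1) (by positivity)
        linarith
    have h3 := hM hmem
    have h4 := le_max_left M 0
    linarith
  -- slope monotonicity for Σ
  have hslope : ∀ x y : ℝ, 0 < x → x ≤ y → Sig x * y ≤ Sig y * x := by
    intro x y hx hxy
    have hy : 0 < y := lt_of_lt_of_le hx hxy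
    rw [hSig x hx.le, hSig y hy.le]
    have hint : (∫ u in Ioi (0:ℝ), (Real.exp (-(u * x)) - 1 + u * x) ∂η) * y
        ≤ (∫ u in Ioi (0:ℝ), (Real.exp (-(u * y)) - 1 + u * y) ∂η) * x := by
      rw [← integral_mul_const, ← integral_mul_const]
      apply setIntegral_mono_on ((aux1 η hη hx.le).mul_const y)
        ((aux1 η hη hy.le).mul_const x) measurableSet_Ioi
      intro u hu
      exact auxc hu hx hxy
    nlinarith [hint, mul_nonneg (mul_nonneg ha (mul_pos hx hy).le)
      (sub_nonneg.2 hxy)]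
  have hlin : ∀ y : ℝ, 1 ≤ y → Sig 1 * y ≤ Sig y := by
    intro y hy
    have := hslope 1 y one_pos hy
    rwa [mul_one] at this
  have hSigpos : ∀ y : ℝ, 1 ≤ y → 0 < Sig y := by
    intro y hy
    have h1 : 0 < Sig 1 * y := mul_pos hSig1pos (by linarith)
    linarith [hlin y hy]
  -- linear upper bound for Φ
  have hKint := auxK ν hν
  set K := ∫ u in Ioi (0:ℝ), min 1 u ∂ν with hKdef
  have hK0 : 0 ≤ K := by
    apply setIntegral_nonneg measurableSet_Ioi
    intro u hu
    exact le_min zero_le_one (le_of_lt hu)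
  set C := b + K + lam + 1 with hCdef
  have hC0 : 0 < C := by positivity
  have hΦle : ∀ x : ℝ, 1 ≤ x → Φ x ≤ C * x := by
    intro x hx
    have hx0 : (0:ℝ) ≤ x := by linarith
    rw [hΦ x hx0]
    have h1 : (∫ u in Ioi (0:ℝ), (1 - Real.exp (-(x * u))) ∂ν)
        ≤ ∫ u in Ioi (0:ℝ), x * min 1 u ∂ν := by
      apply setIntegral_mono_on (aux2 ν hν hx0) (hKint.const_mul x) measurableSet_Ioi
      intro u hu
      have hu0 : (0:ℝ) < u := hu
      rcases le_total u 1 with h | h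
      · rw [min_eq_right h]
        have := Real.add_one_le_exp (-(x * u))
        linarith
      · rw [min_eq_left h]
        have h2 : 0 ≤ Real.exp (-(x * u)) := Real.exp_nonneg _
        nlinarith
    rw [integral_const_mul] at h1
    have h2 : 0 ≤ lam * (x - 1) := mul_nonneg hlam (by linarith)
    have h3 : 0 ≤ K * (x - 1) := mul_nonneg hK0 (by linarith)
    rw [hCdef]
    nlinarith [h1]
  -- measurable representatives
  have hJ1meas : Measurable (fun x : ℝ =>
      ∫ u in Ioi (0:ℝ), (Real.exp (-(u * max x 0)) - 1 + u * max x 0) ∂η) := by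
    apply Monotone.measurable
    intro s t hst
    have hs0 : 0 ≤ max s 0 := le_max_right _ _
    have hst' : max s 0 ≤ max t 0 := max_le_max hst le_rfl
    apply setIntegral_mono_on (aux1 η hη hs0) (aux1 η hη (hs0.trans hst'))
      measurableSet_Ioi
    intro u hu
    exact auxm hu hs0 hst'
  have hJ2meas : Measurable (fun x : ℝ =>
      ∫ u in Ioi (0:ℝ), (1 - Real.exp (-(max x 0 * u))) ∂ν) := by
    apply Monotone.measurable
    intro s t hst
    have hs0 : 0 ≤ max s 0 := le_max_right _ _
    have hst' : max s 0 ≤ max t 0 := max_le_max hst le_rfl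
    apply setIntegral_mono_on (aux2 ν hν hs0) (aux2 ν hν (hs0.trans hst'))
      measurableSet_Ioi
    intro u hu
    have hu0 : (0:ℝ) < u := hu
    have : Real.exp (-(max t 0 * u)) ≤ Real.exp (-(max s 0 * u)) :=
      Real.exp_le_exp.2 (by nlinarith)
    linarith
  have hmeasF : Measurable (fun w : ℝ => 1 / (a * w ^ 2 + d * w
      + (∫ u in Ioi (0:ℝ), (Real.exp (-(u * max w 0)) - 1 + u * max w 0) ∂η)
      - (b * w + (∫ u in Ioi (0:ℝ), (1 - Real.exp (-(max w 0 * u))) ∂ν) + lam))) := by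
    apply Measurable.div measurable_const
    apply Measurable.sub
    · exact (((measurable_id.pow_const 2).const_mul a).add
        (measurable_id.const_mul d)).add hJ1meas
    · exact ((measurable_id.const_mul b).add hJ2meas).add_const lam
  have hmeasG : Measurable (fun w : ℝ => 1 / (a * w ^ 2 + d * w
      + (∫ u in Ioi (0:ℝ), (Real.exp (-(u * max w 0)) - 1 + u * max w 0) ∂η))) := by
    apply Measurable.div measurable_const
    exact (((measurable_id.pow_const 2).const_mul a).add
      (measurable_id.const_mul d)).add hJ1meas
  have haesm : ∀ x₁ : ℝ, 0 ≤ x₁ →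
      AEStronglyMeasurable (fun u => 1 / Ψ u) (volume.restrict (Ioi x₁)) := by
    intro x₁ hx₁
    apply hmeasF.aestronglyMeasurable.congr
    filter_upwards [ae_restrict_mem measurableSet_Ioi] with w hw
    have hw0 : 0 ≤ w := le_trans hx₁ (le_of_lt hw)
    rw [hΨ w, hSig w hw0, hΦ w hw0, max_eq_left hw0]
  have haesmS : ∀ s : Set ℝ, MeasurableSet s → s ⊆ Ioi (0:ℝ) →
      AEStronglyMeasurable (fun u => 1 / Sig u) (volume.restrict s) := by
    intro s hs hsub
    apply hmeasG.aestronglyMeasurable.congr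
    filter_upwards [ae_restrict_mem hs] with w hw
    have hw0 : 0 ≤ w := le_of_lt (hsub hw)
    rw [hSig w hw0, max_eq_left hw0]
  constructor
  · -- forward direction
    rintro ⟨x₁, hx₁ρ, hint⟩
    set T := max x₁ 1 with hT
    have hTρ : ρ < T := lt_of_lt_of_le hx₁ρ (le_max_left _ _)
    have hT1 : (1:ℝ) ≤ T := le_max_right _ _
    have h1 : IntegrableOn (fun u => 1 / Sig u) (Ioi T) := by
      apply Integrable.mono' (hint.mono_set (Ioi_subset_Ioi (le_max_left _ _)))
        (haesmS (Ioi T) measurableSet_Ioi (Ioi_subset_Ioi (by linarith)))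
      filter_upwards [ae_restrict_mem measurableSet_Ioi] with u hu
      have huT : T < u := hu
      have hu1 : 1 ≤ u := le_trans hT1 huT.le
      have hΨu : 0 < Ψ u := hΨpos u (hTρ.trans huT)
      have hSigu : 0 < Sig u := hSigpos u hu1
      have hle : Ψ u ≤ Sig u := by
        rw [hΨ u]
        have := hΦnonneg u (by linarith)
        linarith
      rw [Real.norm_eq_abs, abs_of_nonneg (by positivity)]
      exact one_div_le_one_div_of_le hΨu hle
    have h2 : IntegrableOn (fun u => 1 / Sig u) (Ioc 1 T) := by
      apply Integrable.mono'
        (show Integrable (fun _ : ℝ => 1 / Sig 1) (volume.restrict (Ioc 1 T)) from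
          integrableOn_const measure_Ioc_lt_top.ne)
        (haesmS (Ioc 1 T) measurableSet_Ioc (fun u hu => lt_trans zero_lt_one hu.1))
      filter_upwards [ae_restrict_mem measurableSet_Ioc] with u hu
      have hu1 : 1 ≤ u := hu.1.le
      have hS1 : Sig 1 ≤ Sig u := by
        have h3 := hlin u hu1
        nlinarith [hSig1pos]
      rw [Real.norm_eq_abs, abs_of_nonneg (one_div_nonneg.2 (hSigpos u hu1).le)]
      exact one_div_le_one_div_of_le hSig1pos hS1
    have h3 := h2.union h1
    rwa [Ioc_union_Ioi_eq_Ioi hT1] at h3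
  · -- backward direction
    intro hint
    by_cases hcase : ∃ y : ℝ, 1 ≤ y ∧ 2 * C * y ≤ Sig y
    · obtain ⟨y₀, hy₀1, hy₀⟩ := hcase
      refine ⟨max y₀ (ρ + 1), lt_of_lt_of_le (by linarith) (le_max_right _ _), ?_⟩
      set x₁ := max y₀ (ρ + 1) with hx₁def
      have hx₁1 : 1 ≤ x₁ := le_trans hy₀1 (le_max_left _ _)
      have hg : IntegrableOn (fun u => 2 * (1 / Sig u)) (Ioi x₁) :=
        (hint.mono_set (Ioi_subset_Ioi (by linarith))).const_mul 2
      apply Integrable.mono' hg (haesm x₁ (by linarith))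
      filter_upwards [ae_restrict_mem measurableSet_Ioi] with u hu
      have hu1 : 1 < u := lt_of_le_of_lt hx₁1 hu
      have huy₀ : y₀ ≤ u := le_trans (le_max_left _ _) (le_of_lt hu)
      have hSig2C : 2 * C * u ≤ Sig u := by
        have h1 := hslope y₀ u (by linarith) huy₀
        have h2 : 2 * C * y₀ * u ≤ Sig y₀ * u :=
          mul_le_mul_of_nonneg_right hy₀ (by linarith)
        nlinarith [h1, h2]
      have hΦu : Φ u ≤ C * u := hΦle u hu1.le
      have hSigu : 0 < Sig u := hSigpos u hu1.le
      have hΨu : Sig u / 2 ≤ Ψ u := by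
        rw [hΨ u]; linarith
      have hΨupos : 0 < Ψ u := by linarith
      rw [Real.norm_eq_abs, abs_of_nonneg (by positivity)]
      have hsplit : 2 * (1 / Sig u) = 1 / (Sig u / 2) := by
        field_simp
      rw [hsplit]
      exact one_div_le_one_div_of_le (by positivity) hΨu
    · push_neg at hcase
      exfalso
      have hii : IntegrableOn (fun u : ℝ => 1 / (2 * C * u)) (Ioi 1) := by
        apply Integrable.mono' hint
        · exact (measurable_const.div
            ((measurable_id.const_mul (2 * C)))).aestronglyMeasurable
        filter_upwards [ae_restrict_mem measurableSet_Ioi] with u hu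
        have hu1 : (1:ℝ) < u := hu
        have hpos : 0 < 2 * C * u := by positivity
        rw [Real.norm_eq_abs, abs_of_nonneg (by positivity)]
        exact one_div_le_one_div_of_le (hSigpos u hu1.le)
          (le_of_lt (hcase u hu1.le))
      have hinv : IntegrableOn (fun u : ℝ => u⁻¹) (Ioi 1) := by
        refine IntegrableOn.congr_fun (hii.const_mul (2 * C)) ?_ measurableSet_Ioi
        intro u hu
        have hu0 : u ≠ 0 := ne_of_gt (lt_trans zero_lt_one hu)
        have hC' : (2 * C) ≠ 0 := by positivity
        field_simp
      exact not_IntegrableOn_Ioi_inv hinv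
end

section
/- Let Φ(x) = γ⁺ x + ∫_1^∞ (1 − e^{-xu}) π(du) + λ and Φⁿ(y) = γ⁺ y + ∫ (1 − e^{-yu}) πₙ(du) where πₙ(du) = π(du) 1_{[1,n)}(u) + (π([n,∞)) + λ) δₙ(du). Then the sequence (Φⁿ)ₙ is pointwise non-decreasing in n, and for all n ≥ 1 and x ∈ (0,∞): 0 ≤ Φ(x) − Φⁿ(x) ≤ π([n,∞)) + λ e^{-xn}. In particular Φⁿ → Φ locally uniformly on (0,∞). -/
open MeasureTheory Filter Set Topology

lemma gmeas (x : ℝ) : Measurable fun u : ℝ => 1 - Real.exp (-(x*u)) := by fun_prop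

lemma gmono {x u v : ℝ} (hx : 0 ≤ x) (h : u ≤ v) :
    1 - Real.exp (-(x*u)) ≤ 1 - Real.exp (-(x*v)) := by
  have := Real.exp_le_exp.2 (neg_le_neg (mul_le_mul_of_nonneg_left h hx))
  linarith

lemma gle1 (x u : ℝ) : 1 - Real.exp (-(x*u)) ≤ 1 := by
  have := Real.exp_nonneg (-(x*u)); linarith

lemma gnonneg {x u : ℝ} (hx : 0 ≤ x) (hu : 0 ≤ u) : 0 ≤ 1 - Real.exp (-(x*u)) := by
  have : Real.exp (-(x*u)) ≤ 1 := Real.exp_le_one_iff.2 (by nlinarith)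
  linarith

lemma gint {x : ℝ} (hx : 0 ≤ x) {μ : Measure ℝ} [IsFiniteMeasure μ]
    (hμ : ∀ᵐ u ∂μ, 0 ≤ u) : Integrable (fun u => 1 - Real.exp (-(x*u))) μ := by
  refine (integrable_const (1:ℝ)).mono' (gmeas x).aestronglyMeasurable ?_
  filter_upwards [hμ] with u hu
  rw [Real.norm_eq_abs, abs_le]
  have h1 := gle1 x u
  have h2 : Real.exp (-(x*u)) ≤ 1 := Real.exp_le_one_iff.2 (by nlinarith)
  constructor <;> linarith

/-- Truncated Bernstein functions `Φⁿ` are non-decreasing in `n`, satisfy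
`0 ≤ Φ(x) − Φⁿ(x) ≤ π̄(n) + λ e^{-xn}`, and converge to `Φ` locally uniformly. -/
theorem stmt6 (γ lam : ℝ) (hγ : 0 ≤ γ) (hlam : 0 ≤ lam)
    (π : Measure ℝ) (hsupp : π (Iio 1) = 0)
    (hfin : ∀ u : ℝ, 1 ≤ u → π (Ici u) ≠ ⊤)
    (htail : Tendsto (fun n : ℕ => π (Ici (n : ℝ))) atTop (𝓝 0))
    (πn : ℕ → Measure ℝ)
    (hπn : ∀ n : ℕ, πn n =
      π.restrict (Ico 1 (n : ℝ)) +
        (π (Ici (n : ℝ)) + ENNReal.ofReal lam) • Measure.dirac (n : ℝ))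
    (Φ : ℝ → ℝ) (Φn : ℕ → ℝ → ℝ)
    (hΦ : ∀ x, Φ x = γ * x + (∫ u, (1 - Real.exp (-(x * u))) ∂π) + lam)
    (hΦn : ∀ n x, Φn n x = γ * x + ∫ u, (1 - Real.exp (-(x * u))) ∂(πn n)) :
    (∀ x ∈ Ici (0:ℝ), Monotone fun n => Φn n x) ∧
    (∀ n : ℕ, 1 ≤ n → ∀ x > (0:ℝ),
      0 ≤ Φ x - Φn n x ∧
        Φ x - Φn n x ≤ (π (Ici (n : ℝ))).toReal + lam * Real.exp (-(x * n))) ∧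
    (∀ K : Set ℝ, K ⊆ Ioi 0 → IsCompact K →
      TendstoUniformlyOn (fun n => Φn n) Φ atTop K) := by
  haveI hπfin : IsFiniteMeasure π := by
    constructor
    have h : π univ ≤ π (Iio 1) + π (Ici 1) := by
      rw [← Iio_union_Ici]; exact measure_union_le _ _
    rw [hsupp, zero_add] at h
    exact lt_of_le_of_lt h (lt_top_iff_ne_top.2 (hfin 1 le_rfl))
  have haeπ : ∀ᵐ u ∂π, (1:ℝ) ≤ u := by
    rw [ae_iff]
    convert hsupp using 2
    ext u; simp [not_le]
  have haeπ0 : ∀ᵐ u ∂π, (0:ℝ) ≤ u := haeπ.mono fun u hu => by linarith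
  have hIπ : ∀ x : ℝ, 0 ≤ x → Integrable (fun u => 1 - Real.exp (-(x*u))) π :=
    fun x hx => gint hx haeπ0
  have hresIci : π.restrict (Ici (0:ℝ)) = π :=
    Measure.restrict_eq_self_of_ae_mem haeπ0
  have hres : ∀ b : ℝ, π.restrict (Ico 1 b) = π.restrict (Ico 0 b) := by
    intro b
    refine Measure.restrict_congr_set ?_
    refine Filter.eventuallyEq_set.2 ?_
    filter_upwards [haeπ] with u hu
    simp only [mem_Ico]
    constructor
    · rintro ⟨h1, h2⟩; exact ⟨by linarith, h2⟩
    · rintro ⟨h1, h2⟩; exact ⟨hu, h2⟩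
  have hsplit : ∀ x : ℝ, 0 ≤ x → ∀ b : ℝ, 0 ≤ b →
      (∫ u, (1 - Real.exp (-(x*u))) ∂π) =
        (∫ u in Ico 0 b, (1 - Real.exp (-(x*u))) ∂π) +
          ∫ u in Ici b, (1 - Real.exp (-(x*u))) ∂π := by
    intro x hx b hb
    have hd : Disjoint (Ico (0:ℝ) b) (Ici b) :=
      (Iio_disjoint_Ici le_rfl).mono_left Ico_subset_Iio_self
    have hu : Ico (0:ℝ) b ∪ Ici b = Ici 0 := Ico_union_Ici_eq_Ici hb
    conv_lhs => rw [← hresIci, ← hu, Measure.restrict_union hd measurableSet_Ici]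
    exact integral_add_measure ((hIπ x hx).restrict) ((hIπ x hx).restrict)
  have hkey : ∀ n : ℕ, ∀ x : ℝ, 0 ≤ x →
      Φn n x = γ*x + (∫ u in Ico 0 (n:ℝ), (1 - Real.exp (-(x*u))) ∂π) +
        ((π (Ici (n:ℝ))).toReal + lam) * (1 - Real.exp (-(x*(n:ℝ)))) := by
    intro n x hx
    have hc : (π (Ici (n:ℝ)) + ENNReal.ofReal lam) ≠ ⊤ :=
      ENNReal.add_ne_top.2 ⟨measure_ne_top _ _, ENNReal.ofReal_ne_top⟩
    have hdae : ∀ᵐ u ∂(Measure.dirac (n:ℝ)), (0:ℝ) ≤ u := by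
      rw [MeasureTheory.ae_dirac_eq]; exact Filter.eventually_pure.2 n.cast_nonneg
    have hdint : Integrable (fun u => 1 - Real.exp (-(x*u))) (Measure.dirac (n:ℝ)) :=
      gint hx hdae
    rw [hΦn, hπn, integral_add_measure ((hIπ x hx).restrict) (hdint.smul_measure hc),
      hres, integral_smul_measure, integral_dirac,
      ENNReal.toReal_add (measure_ne_top _ _) ENNReal.ofReal_ne_top,
      ENNReal.toReal_ofReal hlam, smul_eq_mul]
    ring
  -- pointwise lower/upper bounds for tail integrals over a set [c, ·)
  have hlowIci : ∀ n : ℕ, ∀ x : ℝ, 0 ≤ x →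
      (π (Ici (n:ℝ))).toReal * (1 - Real.exp (-(x*(n:ℝ)))) ≤
        ∫ u in Ici (n:ℝ), (1 - Real.exp (-(x*u))) ∂π := by
    intro n x hx
    have h1 : (∫ _ in Ici (n:ℝ), (1 - Real.exp (-(x*(n:ℝ)))) ∂π) =
        (π (Ici (n:ℝ))).toReal * (1 - Real.exp (-(x*(n:ℝ)))) := by
      rw [setIntegral_const, smul_eq_mul, measureReal_def]
    rw [← h1]
    exact setIntegral_mono_on (integrable_const _) ((hIπ x hx).restrict)
      measurableSet_Ici (fun u hu => gmono hx hu)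
  have hupIci : ∀ n : ℕ, ∀ x : ℝ, 0 ≤ x →
      (∫ u in Ici (n:ℝ), (1 - Real.exp (-(x*u))) ∂π) ≤ (π (Ici (n:ℝ))).toReal := by
    intro n x hx
    have h1 : (∫ _ in Ici (n:ℝ), (1:ℝ) ∂π) = (π (Ici (n:ℝ))).toReal := by
      rw [setIntegral_const, smul_eq_mul, mul_one, measureReal_def]
    rw [← h1]
    exact setIntegral_mono_on ((hIπ x hx).restrict) (integrable_const _)
      measurableSet_Ici (fun u _ => gle1 x u)
  have hdiff : ∀ n : ℕ, ∀ x : ℝ, 0 < x →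
      Φ x - Φn n x = (∫ u in Ici (n:ℝ), (1 - Real.exp (-(x*u))) ∂π) -
        (π (Ici (n:ℝ))).toReal * (1 - Real.exp (-(x*(n:ℝ)))) +
        lam * Real.exp (-(x*(n:ℝ))) := by
    intro n x hx
    rw [hΦ, hkey n x hx.le, hsplit x hx.le (n:ℝ) n.cast_nonneg]
    ring
  -- Part 2
  have hpart2 : ∀ n : ℕ, 1 ≤ n → ∀ x > (0:ℝ),
      0 ≤ Φ x - Φn n x ∧
        Φ x - Φn n x ≤ (π (Ici (n:ℝ))).toReal + lam * Real.exp (-(x*(n:ℝ))) := by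
    intro n _ x hx
    rw [hdiff n x hx]
    constructor
    · have h1 := hlowIci n x hx.le
      have h2 := mul_nonneg hlam (Real.exp_nonneg (-(x*(n:ℝ))))
      linarith
    · have h1 := hupIci n x hx.le
      have h2 : 0 ≤ (π (Ici (n:ℝ))).toReal * (1 - Real.exp (-(x*(n:ℝ)))) :=
        mul_nonneg ENNReal.toReal_nonneg (gnonneg hx.le n.cast_nonneg)
      linarith
  -- Part 1 : monotone in n
  have hpart1 : ∀ x ∈ Ici (0:ℝ), Monotone fun n => Φn n x := by
    intro x hx
    have hx0 : (0:ℝ) ≤ x := hx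
    apply monotone_nat_of_le_succ
    intro n
    have hcast : ((n+1 : ℕ) : ℝ) = (n:ℝ)+1 := by push_cast; ring
    have hd1 : Disjoint (Ico (0:ℝ) (n:ℝ)) (Ico (n:ℝ) ((n:ℝ)+1)) :=
      (Iio_disjoint_Ici le_rfl).mono Ico_subset_Iio_self Ico_subset_Ici_self
    have hd2 : Disjoint (Ico (n:ℝ) ((n:ℝ)+1)) (Ici ((n:ℝ)+1)) :=
      (Iio_disjoint_Ici le_rfl).mono_left Ico_subset_Iio_self
    have hintsplit : (∫ u in Ico 0 ((n:ℝ)+1), (1 - Real.exp (-(x*u))) ∂π) =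
        (∫ u in Ico 0 (n:ℝ), (1 - Real.exp (-(x*u))) ∂π) +
          ∫ u in Ico (n:ℝ) ((n:ℝ)+1), (1 - Real.exp (-(x*u))) ∂π := by
      rw [← Ico_union_Ico_eq_Ico n.cast_nonneg (by linarith : (n:ℝ) ≤ (n:ℝ)+1),
        Measure.restrict_union hd1 measurableSet_Ico]
      exact integral_add_measure ((hIπ x hx0).restrict) ((hIπ x hx0).restrict)
    have hmsplit : (π (Ici (n:ℝ))).toReal =
        (π (Ico (n:ℝ) ((n:ℝ)+1))).toReal + (π (Ici ((n:ℝ)+1))).toReal := by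
      rw [← ENNReal.toReal_add (measure_ne_top _ _) (measure_ne_top _ _),
        ← measure_union hd2 measurableSet_Ici,
        Ico_union_Ici_eq_Ici (by linarith : (n:ℝ) ≤ (n:ℝ)+1)]
    have hB : (π (Ico (n:ℝ) ((n:ℝ)+1))).toReal * (1 - Real.exp (-(x*(n:ℝ)))) ≤
        ∫ u in Ico (n:ℝ) ((n:ℝ)+1), (1 - Real.exp (-(x*u))) ∂π := by
      have h1 : (∫ _ in Ico (n:ℝ) ((n:ℝ)+1), (1 - Real.exp (-(x*(n:ℝ)))) ∂π) =
          (π (Ico (n:ℝ) ((n:ℝ)+1))).toReal * (1 - Real.exp (-(x*(n:ℝ)))) := by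
        rw [setIntegral_const, smul_eq_mul, measureReal_def]
      rw [← h1]
      exact setIntegral_mono_on (integrable_const _) ((hIπ x hx0).restrict)
        measurableSet_Ico (fun u hu => gmono hx0 hu.1)
    have hgm : 1 - Real.exp (-(x*(n:ℝ))) ≤ 1 - Real.exp (-(x*((n:ℝ)+1))) :=
      gmono hx0 (by linarith)
    have hg0 : 0 ≤ 1 - Real.exp (-(x*(n:ℝ))) := gnonneg hx0 n.cast_nonneg
    have ht1 : (0:ℝ) ≤ (π (Ici ((n:ℝ)+1))).toReal := ENNReal.toReal_nonneg
    have ht2 : (0:ℝ) ≤ (π (Ico (n:ℝ) ((n:ℝ)+1))).toReal := ENNReal.toReal_nonneg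
    simp only [hkey n x hx0, hkey (n+1) x hx0, hcast, hintsplit, hmsplit]
    nlinarith [mul_nonneg (add_nonneg ht1 hlam)
      (sub_nonneg.2 hgm)]
  refine ⟨hpart1, hpart2, ?_⟩
  -- Part 3
  intro K hK hKc
  rcases K.eq_empty_or_nonempty with rfl | hne
  · exact tendstoUniformlyOn_empty
  obtain ⟨a, haK, hmin⟩ := hKc.exists_isMinOn hne continuous_id.continuousOn
  have ha : 0 < a := hK haK
  rw [Metric.tendstoUniformlyOn_iff]
  intro ε hε
  have h1 : Tendsto (fun n : ℕ => (π (Ici (n:ℝ))).toReal) atTop (𝓝 0) := by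
    have := (ENNReal.tendsto_toReal (by simp : (0:ENNReal) ≠ ⊤)).comp htail
    simpa [Function.comp_def] using this
  have h2 : Tendsto (fun n : ℕ => lam * Real.exp (-(a*(n:ℝ)))) atTop (𝓝 0) := by
    have h3 : Tendsto (fun n : ℕ => a*(n:ℝ)) atTop atTop :=
      (tendsto_natCast_atTop_atTop (R := ℝ)).const_mul_atTop ha
    have h4 : Tendsto (fun n : ℕ => -(a*(n:ℝ))) atTop atBot := tendsto_neg_atTop_atBot.comp h3
    have h5 := Real.tendsto_exp_atBot.comp h4
    have h6 := h5.const_mul lam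
    simpa using h6
  have hsum : Tendsto (fun n : ℕ => (π (Ici (n:ℝ))).toReal + lam * Real.exp (-(a*(n:ℝ))))
      atTop (𝓝 0) := by simpa using h1.add h2
  have hev : ∀ᶠ n : ℕ in atTop,
      (π (Ici (n:ℝ))).toReal + lam * Real.exp (-(a*(n:ℝ))) < ε :=
    hsum.eventually_lt_const hε
  filter_upwards [hev, eventually_ge_atTop 1] with n hn hn1
  intro x hx
  have hx0 : 0 < x := hK hx
  have hax : a ≤ x := hmin hx
  obtain ⟨hge, hle⟩ := hpart2 n hn1 x hx0
  rw [Real.dist_eq, abs_of_nonneg hge]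
  have hexp : Real.exp (-(x*(n:ℝ))) ≤ Real.exp (-(a*(n:ℝ))) :=
    Real.exp_le_exp.2 (neg_le_neg (mul_le_mul_of_nonneg_right hax n.cast_nonneg))
  have := mul_le_mul_of_nonneg_left hexp hlam
  linarith
end

section
/- Let Σ̂ be a (sub)critical mechanism with Σ̂(x)/x² → 0 as x → ∞ (no quadratic part, with ∫_1^∞ dx/Σ̂(x) < ∞) and λ > 0. Then x ∫_{x+1}^∞ dh/Σ̂(h) → ∞ as x → ∞, hence liminf_{x→∞} λ x ∫_1^∞ dh/Σ̂(x+h) = ∞. -/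
open MeasureTheory Filter Set Topology

/-- If `Σ̂(x)/x² → 0` at `∞`, `∫_1^∞ dx/Σ̂(x) < ∞` and `λ > 0`, then
`x ∫_{x+1}^∞ dh/Σ̂(h) → ∞`, hence `λ x ∫_1^∞ dh/Σ̂(x+h) → ∞` as `x → ∞`. -/
theorem stmt11 (Sig : ℝ → ℝ) (lam : ℝ) (hlam : 0 < lam)
    (hpos : ∀ x > (0:ℝ), 0 < Sig x) (hmono : MonotoneOn Sig (Ici 0))
    (hconvex : ConvexOn ℝ (Ici 0) Sig)
    (hratio : MonotoneOn (fun x => Sig x / x) (Ioi 0))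
    (hquad : Tendsto (fun x => Sig x / x ^ 2) atTop (𝓝 0))
    (hint : IntegrableOn (fun x => 1 / Sig x) (Ioi 1)) :
    Tendsto (fun x => x * ∫ h in Ioi (x + 1), 1 / Sig h) atTop atTop ∧
    Tendsto (fun x => lam * (x * ∫ h in Ioi (1:ℝ), 1 / Sig (x + h))) atTop atTop := by
  have key : Tendsto (fun x => x * ∫ h in Ioi (x + 1), 1 / Sig h) atTop atTop := by
    rw [tendsto_atTop]
    intro C
    set K : ℝ := max C 1 with hKdef
    have hK0 : (0:ℝ) < K := lt_of_lt_of_le one_pos (le_max_right _ _)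
    have hCK : C ≤ K := le_max_left _ _
    have hε : (0:ℝ) < 1 / (8 * K) := by positivity
    obtain ⟨x₀, hx₀⟩ := eventually_atTop.1 (hquad.eventually_lt_const hε)
    filter_upwards [eventually_ge_atTop (max x₀ 1)] with x hx
    have hx1 : (1:ℝ) ≤ x := le_trans (le_max_right _ _) hx
    have hxx0 : x₀ ≤ x := le_trans (le_max_left _ _) hx
    set a : ℝ := x + 1 with ha
    have ha0 : (0:ℝ) < a := by simp only [ha]; linarith
    have hfint : IntegrableOn (fun h => 1 / Sig h) (Ioi a) :=
      hint.mono_set (Ioi_subset_Ioi (by linarith))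
    -- pointwise bound on Ioc a (2*a)
    have hbound : ∀ h ∈ Ioc a (2 * a), 2 * K / a ^ 2 ≤ 1 / Sig h := by
      intro h hh
      have hha : a < h := hh.1
      have hh2a : h ≤ 2 * a := hh.2
      have hh0 : (0:ℝ) < h := lt_trans ha0 hha
      have hSig : 0 < Sig h := hpos h hh0
      have hsmall : Sig h / h ^ 2 < 1 / (8 * K) := hx₀ h (by simp only [ha] at hha; linarith)
      have hd : Sig h < 1 / (8 * K) * h ^ 2 :=
        (div_lt_iff₀ (by positivity : (0:ℝ) < h ^ 2)).1 hsmall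
      rw [div_le_div_iff₀ (by positivity) hSig]
      have h2 : h ^ 2 ≤ 4 * a ^ 2 := by nlinarith
      have : Sig h * (8 * K) < h ^ 2 := by
        calc Sig h * (8 * K) < 1 / (8 * K) * h ^ 2 * (8 * K) :=
              mul_lt_mul_of_pos_right hd (by positivity)
          _ = h ^ 2 := by field_simp
      nlinarith
    -- integral lower bound on Ioc a (2*a)
    have hconst : IntegrableOn (fun _ : ℝ => 2 * K / a ^ 2) (Ioc a (2 * a)) :=
      integrableOn_const measure_Ioc_lt_top.ne (by simp)
    have hIoc : (2 * a - a) * (2 * K / a ^ 2) ≤ ∫ h in Ioc a (2 * a), 1 / Sig h := by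
      have := setIntegral_mono_on hconst (hfint.mono_set Ioc_subset_Ioi_self)
        measurableSet_Ioc hbound
      rwa [setIntegral_const, measureReal_def, Real.volume_Ioc, ENNReal.toReal_ofReal (by linarith),
        smul_eq_mul] at this
    have hnn : 0 ≤ᵐ[volume.restrict (Ioi a)] fun h => 1 / Sig h := by
      filter_upwards [self_mem_ae_restrict measurableSet_Ioi] with h hh
      simpa using le_of_lt (div_pos one_pos (hpos h (lt_trans ha0 hh)))
    have hmonoset : ∫ h in Ioc a (2 * a), 1 / Sig h ≤ ∫ h in Ioi a, 1 / Sig h :=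
      setIntegral_mono_set hfint hnn (HasSubset.Subset.eventuallyLE Ioc_subset_Ioi_self)
    have hItail : 2 * K / a ≤ ∫ h in Ioi a, 1 / Sig h := by
      have : (2 * a - a) * (2 * K / a ^ 2) = 2 * K / a := by
        field_simp; ring
      linarith [hIoc, hmonoset, this ▸ hIoc]
    have hxpos : (0:ℝ) < x := lt_of_lt_of_le one_pos hx1
    calc C ≤ K := hCK
      _ ≤ x * (2 * K / a) := by
          rw [mul_div_assoc', le_div_iff₀ ha0]
          nlinarith
      _ ≤ x * ∫ h in Ioi a, 1 / Sig h :=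
          mul_le_mul_of_nonneg_left hItail (le_of_lt hxpos)
  have heq : ∀ x : ℝ, (∫ h in Ioi (1:ℝ), 1 / Sig (x + h)) = ∫ h in Ioi (x + 1), 1 / Sig h := by
    intro x
    have := (measurePreserving_add_left volume x).setIntegral_preimage_emb
      (measurableEmbedding_addLeft x) (fun h => 1 / Sig h) (Ioi (x + 1))
    simpa [preimage_const_add_Ioi] using this
  refine ⟨key, ?_⟩
  have : Tendsto (fun x => x * ∫ h in Ioi (1:ℝ), 1 / Sig (x + h)) atTop atTop := by
    refine key.congr fun x => ?_
    rw [heq x]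
  exact this.const_mul_atTop hlam
end

section
/- Let Φ(z) = γ⁺ z + ∫₀^∞ (1 − e^{-zh}) ν(dh) + λ be a Bernstein function and Ŵ the scale function of Σ̂ with ∫_0^1 Ŵ(z)/z dz < ∞. Write ν̄(u) = ν([u,∞)). Then for every x > 0: x ∫₀^∞ (Φ(z) Ŵ(z)/z) e^{-zx} dz = γ⁺ x/Σ̂(x) + x ∫₀^∞ (ν̄(u) + λ)/Σ̂(x+u) du. Consequently, since x/Σ̂(x) → 0 as x → ∞ (under ∫_1^∞ du/Σ̂(u) < ∞), liminf_{x→∞} x∫₀^∞ (Φ(z)Ŵ(z)/z)e^{-zx}dz = liminf_{x→∞} x ∫_1^∞ (ν̄(u)+λ)/Σ̂(x+u) du (and similarly for limsup). -/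
open MeasureTheory Filter Set Topology

set_option maxHeartbeats 1000000

private lemma myInf_le {A B : Set ℝ} (hAB : ∀ a ∈ A, ∀ δ > (0:ℝ), a + δ ∈ B)
    (hBA : ∀ b ∈ B, ∀ δ > (0:ℝ), b + δ ∈ A) : sInf A ≤ sInf B := by
  rcases B.eq_empty_or_nonempty with hB | hB
  · have hA : A = ∅ := by
      rcases A.eq_empty_or_nonempty with h | ⟨a, ha⟩
      · exact h
      · exact absurd (hAB a ha 1 one_pos) (by simp [hB])
    rw [hA, hB]
  · obtain ⟨b, hb⟩ := hB
    have hAne : A.Nonempty := ⟨b + 1, hBA b hb 1 one_pos⟩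
    by_cases hBb : BddBelow B
    · obtain ⟨m, hm⟩ := hBb
      have hAb : BddBelow A := ⟨m - 1, fun a ha => by
        have := hm (hAB a ha 1 one_pos); linarith⟩
      refine le_csInf ⟨b, hb⟩ (fun b' hb' => ?_)
      refine le_of_forall_pos_le_add (fun δ hδ => ?_)
      exact csInf_le hAb (hBA b' hb' δ hδ)
    · have hAb : ¬ BddBelow A := by
        intro ⟨m, hm⟩
        exact hBb ⟨m - 1, fun b' hb' => by
          have := hm (hBA b' hb' 1 one_pos); linarith⟩
      rw [Real.sInf_of_not_bddBelow hAb, Real.sInf_of_not_bddBelow hBb]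

private lemma mySup_le {A B : Set ℝ} (hAB : ∀ a ∈ A, ∀ δ > (0:ℝ), a - δ ∈ B)
    (hBA : ∀ b ∈ B, ∀ δ > (0:ℝ), b - δ ∈ A) : sSup A ≤ sSup B := by
  rcases A.eq_empty_or_nonempty with hA | hA
  · have hB : B = ∅ := by
      rcases B.eq_empty_or_nonempty with h | ⟨b, hb⟩
      · exact h
      · exact absurd (hBA b hb 1 one_pos) (by simp [hA])
    rw [hA, hB]
  · obtain ⟨a, ha⟩ := hA
    have hBne : B.Nonempty := ⟨a - 1, hAB a ha 1 one_pos⟩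
    by_cases hBb : BddAbove B
    · obtain ⟨m, hm⟩ := hBb
      have hAb : BddAbove A := ⟨m + 1, fun a' ha' => by
        have := hm (hAB a' ha' 1 one_pos); linarith⟩
      refine csSup_le ⟨a, ha⟩ (fun a' ha' => ?_)
      refine le_of_forall_pos_le_add (fun δ hδ => ?_)
      have := le_csSup ⟨m, hm⟩ (hAB a' ha' δ hδ)
      linarith
    · have hAb : ¬ BddAbove A := by
        intro ⟨m, hm⟩
        exact hBb ⟨m + 1, fun b' hb' => by
          have := hm (hBA b' hb' 1 one_pos); linarith⟩
      rw [Real.sSup_of_not_bddAbove hAb, Real.sSup_of_not_bddAbove hBb]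

private lemma lim_eq_of_sub_tendsto_zero {f g : ℝ → ℝ}
    (h : Tendsto (fun x => f x - g x) atTop (𝓝 0)) :
    liminf f atTop = liminf g atTop ∧ limsup f atTop = limsup g atTop := by
  have key : ∀ δ > (0:ℝ), ∀ᶠ x in atTop, |f x - g x| < δ := by
    intro δ hδ
    have := Metric.tendsto_nhds.mp h δ hδ
    simpa [Real.dist_eq] using this
  constructor
  · rw [liminf_eq, liminf_eq]
    apply le_antisymm
    · refine mySup_le (fun a ha δ hδ => ?_) (fun b hb δ hδ => ?_)
      · filter_upwards [ha, key δ hδ] with x h1 h2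
        have := abs_lt.mp h2; linarith
      · filter_upwards [hb, key δ hδ] with x h1 h2
        have := abs_lt.mp h2; linarith
    · refine mySup_le (fun a ha δ hδ => ?_) (fun b hb δ hδ => ?_)
      · filter_upwards [ha, key δ hδ] with x h1 h2
        have := abs_lt.mp h2; linarith
      · filter_upwards [hb, key δ hδ] with x h1 h2
        have := abs_lt.mp h2; linarith
  · rw [limsup_eq, limsup_eq]
    apply le_antisymm
    · refine myInf_le (fun a ha δ hδ => ?_) (fun b hb δ hδ => ?_)
      · filter_upwards [ha, key δ hδ] with x h1 h2
        have := abs_lt.mp h2; linarith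
      · filter_upwards [hb, key δ hδ] with x h1 h2
        have := abs_lt.mp h2; linarith
    · refine myInf_le (fun a ha δ hδ => ?_) (fun b hb δ hδ => ?_)
      · filter_upwards [ha, key δ hδ] with x h1 h2
        have := abs_lt.mp h2; linarith
      · filter_upwards [hb, key δ hδ] with x h1 h2
        have := abs_lt.mp h2; linarith

private lemma expIntegrable {z : ℝ} (hz : 0 < z) (a : ℝ) :
    IntegrableOn (fun u : ℝ => Real.exp (-(z * u))) (Ioi a) := by
  simpa [neg_mul] using exp_neg_integrableOn_Ioi a hz

private lemma expInt {z : ℝ} (hz : 0 < z) (c : ℝ) :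
    ∫ u in Ioi c, Real.exp (-(z * u)) = Real.exp (-(z * c)) / z := by
  have := MeasureTheory.integral_comp_mul_left_Ioi (fun x => Real.exp (-x)) c hz
  simp only [integral_exp_neg_Ioi] at this
  rw [this, smul_eq_mul]
  field_simp

private lemma expIntIoc {z : ℝ} (hz : 0 < z) {h : ℝ} (hh : 0 ≤ h) :
    ∫ u in Ioc 0 h, Real.exp (-(z * u)) = (1 - Real.exp (-(z * h))) / z := by
  have hsplit : Ioc 0 h ∪ Ioi h = Ioi (0:ℝ) := Ioc_union_Ioi_eq_Ioi hh
  have hint : ∀ a : ℝ, IntegrableOn (fun u => Real.exp (-(z * u))) (Ioi a) :=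
    fun a => by simpa [neg_mul] using exp_neg_integrableOn_Ioi a hz
  have hIoc : IntegrableOn (fun u => Real.exp (-(z * u))) (Ioc 0 h) :=
    (hint 0).mono_set Ioc_subset_Ioi_self
  have hd : Disjoint (Ioc (0:ℝ) h) (Ioi h) := Ioc_disjoint_Ioi le_rfl
  have := MeasureTheory.setIntegral_union (μ := volume) (s := Ioc (0:ℝ) h)
    (t := Ioi h) (f := fun u => Real.exp (-(z * u))) hd measurableSet_Ioi hIoc (hint h)
  rw [hsplit] at this
  rw [expInt hz 0, expInt hz h] at this
  have hz' : z ≠ 0 := ne_of_gt hz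
  field_simp at this ⊢
  simp only [mul_zero, neg_zero, Real.exp_zero] at this
  linarith

/-- The identity `x ∫₀^∞ (Φ(z)Ŵ(z)/z)e^{-zx} dz = γ⁺x/Σ̂(x) + x∫₀^∞ (ν̄(u)+λ)/Σ̂(x+u) du`
and the resulting equality of liminf/limsup as `x → ∞`. -/
theorem stmt14 (γ lam : ℝ) (hγ : 0 ≤ γ) (hlam : 0 ≤ lam)
    (ν : Measure ℝ) (hνsupp : ν (Iio 1) = 0) (hνfin : ∀ u > (0:ℝ), ν (Ici u) ≠ ⊤)
    (Φ Sig W : ℝ → ℝ)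
    (hΦ : ∀ z, 0 ≤ z →
      Φ z = γ * z + (∫ h in Ioi (0:ℝ), (1 - Real.exp (-(z * h))) ∂ν) + lam)
    (hSigpos : ∀ x > (0:ℝ), 0 < Sig x)
    (hLap : ∀ x > (0:ℝ), 1 / Sig x = ∫ z in Ioi (0:ℝ), Real.exp (-(x * z)) * W z)
    (hWnn : ∀ z > (0:ℝ), 0 ≤ W z)
    (hWint : ∫⁻ z in Ioo (0:ℝ) 1, ENNReal.ofReal (W z / z) ≠ ⊤)
    (hIntSig : IntegrableOn (fun u => 1 / Sig u) (Ioi 1))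
    (hxo : Tendsto (fun x => x / Sig x) atTop (𝓝 0)) :
    (∀ x > (0:ℝ),
      x * ∫ z in Ioi (0:ℝ), Φ z * W z / z * Real.exp (-(z * x)) =
        γ * x / Sig x + x * ∫ u in Ioi (0:ℝ), ((ν (Ici u)).toReal + lam) / Sig (x + u)) ∧
    Filter.liminf
        (fun x => x * ∫ z in Ioi (0:ℝ), Φ z * W z / z * Real.exp (-(z * x))) atTop =
      Filter.liminf
        (fun x => x * ∫ u in Ioi (1:ℝ), ((ν (Ici u)).toReal + lam) / Sig (x + u)) atTop ∧
    Filter.limsup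
        (fun x => x * ∫ z in Ioi (0:ℝ), Φ z * W z / z * Real.exp (-(z * x))) atTop =
      Filter.limsup
        (fun x => x * ∫ u in Ioi (1:ℝ), ((ν (Ici u)).toReal + lam) / Sig (x + u)) atTop := by
  -- ν is a finite measure
  haveI hνFin : IsFiniteMeasure ν := by
    constructor
    calc ν univ ≤ ν (Iio 1) + ν (Ici 1) := by
          rw [← Iio_union_Ici (a := (1:ℝ))]; exact measure_union_le _ _
      _ = ν (Ici 1) := by rw [hνsupp, zero_add]
      _ < ⊤ := lt_top_iff_ne_top.mpr (hνfin 1 one_pos)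
  have hc : ν (Ici (1:ℝ)) ≠ ⊤ := hνfin 1 one_pos
  have hbound : ∀ u : ℝ, ν (Ici u) ≤ ν (Ici 1) := by
    intro u
    calc ν (Ici u) ≤ ν univ := measure_mono (subset_univ _)
      _ ≤ ν (Iio 1) + ν (Ici 1) := by
          rw [← Iio_union_Ici (a := (1:ℝ))]; exact measure_union_le _ _
      _ = ν (Ici 1) := by rw [hνsupp, zero_add]
  have hbtop : ∀ u : ℝ, ν (Ici u) ≠ ⊤ := fun u => ne_top_of_le_ne_top hc (hbound u)
  have hνbmeas : Measurable (fun u : ℝ => ν (Ici u)) :=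
    Antitone.measurable (fun a b hab => measure_mono (Ici_subset_Ici.mpr hab))
  have hν1 : ∀ᵐ h ∂ν, (1:ℝ) ≤ h := by
    rw [ae_iff]; simp only [not_le]; exact hνsupp
  have hν1' : ∀ᵐ h ∂(ν.restrict (Ioi (0:ℝ))), (1:ℝ) ≤ h := ae_restrict_of_ae hν1
  have haeIciIoi : (fun u : ℝ => ν (Ici u)) =ᵐ[(volume : Measure ℝ)]
      (fun u => ν (Ioi u)) := by
    have := meas_le_ae_eq_meas_lt ν (volume : Measure ℝ) id
    simpa [Ici, Ioi] using this
  -- integrability of the Laplace integrand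
  have hW1 : ∀ y > (0:ℝ), IntegrableOn (fun z => Real.exp (-(y * z)) * W z) (Ioi 0) := by
    intro y hy
    by_contra hcon
    have h0 := MeasureTheory.integral_undef hcon
    rw [← hLap y hy] at h0
    exact absurd h0 (ne_of_gt (div_pos one_pos (hSigpos y hy)))
  have hWaem : AEMeasurable W (volume.restrict (Ioi 0)) := by
    have h1 := (hW1 1 one_pos).aestronglyMeasurable.aemeasurable
    have h2 : AEMeasurable (fun z => Real.exp (1 * z) * (Real.exp (-(1 * z)) * W z))
        (volume.restrict (Ioi 0)) :=
      (Real.measurable_exp.comp (measurable_id.const_mul 1)).aemeasurable.mul h1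
    refine h2.congr (Eventually.of_forall (fun z => ?_))
    show Real.exp (1 * z) * (Real.exp (-(1 * z)) * W z) = W z
    rw [← mul_assoc, ← Real.exp_add]; simp
  set W₀ : ℝ → ℝ := fun z => max (hWaem.mk W z) 0 with hW₀def
  have hW₀meas : Measurable W₀ := hWaem.measurable_mk.max measurable_const
  have hW₀nn : ∀ z, 0 ≤ W₀ z := fun z => le_max_right _ _
  have hW₀ae : ∀ᵐ z ∂(volume.restrict (Ioi (0:ℝ))), W z = W₀ z := by
    filter_upwards [hWaem.ae_eq_mk, self_mem_ae_restrict measurableSet_Ioi] with z h1 h2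
    rw [hW₀def]; simp only; rw [← h1]; exact (max_eq_left (hWnn z h2)).symm
  have hW₀int : ∀ y > (0:ℝ), IntegrableOn (fun z => Real.exp (-(y * z)) * W₀ z) (Ioi 0) := by
    intro y hy
    refine (hW1 y hy).congr ?_
    filter_upwards [hW₀ae] with z hz; rw [hz]
  have hLap₀ : ∀ y > (0:ℝ), ∫⁻ z in Ioi (0:ℝ), ENNReal.ofReal (Real.exp (-(y * z)) * W₀ z) =
      ENNReal.ofReal (1 / Sig y) := by
    intro y hy
    rw [← ofReal_integral_eq_lintegral_ofReal (hW₀int y hy)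
      (Eventually.of_forall fun z => mul_nonneg (Real.exp_nonneg _) (hW₀nn z))]
    congr 1
    rw [hLap y hy]
    refine integral_congr_ae ?_
    filter_upwards [hW₀ae] with z hz; rw [hz]
  -- antitonicity of 1/Sig
  have hSi : ∀ a b : ℝ, 0 < a → a ≤ b → 1 / Sig b ≤ 1 / Sig a := by
    intro a b ha hab
    have hb : 0 < b := lt_of_lt_of_le ha hab
    rw [hLap a ha, hLap b hb]
    refine setIntegral_mono_on (hW1 b hb) (hW1 a ha) measurableSet_Ioi (fun z hz => ?_)
    have hz' : (0:ℝ) < z := hz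
    refine mul_le_mul_of_nonneg_right (Real.exp_le_exp.mpr ?_) (hWnn z hz)
    nlinarith [mul_le_mul_of_nonneg_right hab hz'.le]
  -- nonnegativity facts
  have hIνnn : ∀ z : ℝ, 0 ≤ z → 0 ≤ ∫ h in Ioi (0:ℝ), (1 - Real.exp (-(z * h))) ∂ν := by
    intro z hz
    refine integral_nonneg_of_ae ?_
    filter_upwards [hν1'] with h hh
    have h1 : Real.exp (-(z * h)) ≤ 1 := by
      rw [Real.exp_le_one_iff]; nlinarith
    show (0:ℝ) ≤ 1 - Real.exp (-(z * h))
    linarith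
  have hΦnn : ∀ z : ℝ, 0 < z → 0 ≤ Φ z := by
    intro z hz; rw [hΦ z hz.le]
    have := hIνnn z hz.le
    nlinarith [mul_nonneg hγ hz.le]
  have hIνint : ∀ z : ℝ, 0 ≤ z → Integrable (fun h => 1 - Real.exp (-(z * h)))
      (ν.restrict (Ioi 0)) := by
    intro z hz
    refine Integrable.mono' (integrable_const 1)
      ((continuous_const.sub (Real.continuous_exp.comp
        ((continuous_const.mul continuous_id).neg))).aestronglyMeasurable) ?_
    filter_upwards [hν1'] with h hh
    have h0 : 0 ≤ Real.exp (-(z * h)) := Real.exp_nonneg _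
    have h1 : Real.exp (-(z * h)) ≤ 1 := by
      rw [Real.exp_le_one_iff]; nlinarith
    rw [Real.norm_eq_abs, abs_le]; constructor <;> linarith
  -- the key Fubini identity for the measure ν
  have claimB : ∀ z : ℝ, 0 < z →
      ∫⁻ u in Ioi (0:ℝ), ENNReal.ofReal (Real.exp (-(z * u))) * ν (Ici u) =
      ENNReal.ofReal ((∫ h in Ioi (0:ℝ), (1 - Real.exp (-(z * h))) ∂ν) / z) := by
    intro z hz
    have e1 : ∫⁻ u in Ioi (0:ℝ), ENNReal.ofReal (Real.exp (-(z * u))) * ν (Ici u) =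
        ∫⁻ u in Ioi (0:ℝ), ENNReal.ofReal (Real.exp (-(z * u))) * ν (Ioi u) := by
      refine lintegral_congr_ae (ae_restrict_of_ae ?_)
      filter_upwards [haeIciIoi] with u hu; rw [hu]
    have e2 : ∀ u ∈ Ioi (0:ℝ), ENNReal.ofReal (Real.exp (-(z * u))) * ν (Ioi u) =
        ∫⁻ h in Ioi (0:ℝ),
          (Ioi u).indicator (fun _ => ENNReal.ofReal (Real.exp (-(z * u)))) h ∂ν := by
      intro u hu
      rw [lintegral_indicator measurableSet_Ioi, setLIntegral_const,
        Measure.restrict_apply measurableSet_Ioi,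
        inter_eq_self_of_subset_left (Ioi_subset_Ioi (le_of_lt hu)), mul_comm]
    have hFm : Measurable (Function.uncurry (fun (u h : ℝ) =>
        (Ioi u).indicator (fun _ => ENNReal.ofReal (Real.exp (-(z * u)))) h)) := by
      have : Function.uncurry (fun (u h : ℝ) =>
          (Ioi u).indicator (fun _ => ENNReal.ofReal (Real.exp (-(z * u)))) h) =
          fun p : ℝ × ℝ => {q : ℝ × ℝ | q.1 < q.2}.indicator
            (fun q => ENNReal.ofReal (Real.exp (-(z * q.1)))) p := by
        funext p
        simp only [Function.uncurry, Set.indicator, Set.mem_Ioi, Set.mem_setOf_eq]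
      rw [this]
      exact Measurable.indicator
        (ENNReal.measurable_ofReal.comp
          (Real.measurable_exp.comp ((measurable_fst.const_mul z).neg)))
        (measurableSet_lt measurable_fst measurable_snd)
    have e3 : ∫⁻ u in Ioi (0:ℝ), ∫⁻ h in Ioi (0:ℝ),
          (Ioi u).indicator (fun _ => ENNReal.ofReal (Real.exp (-(z * u)))) h ∂ν =
        ∫⁻ h in Ioi (0:ℝ), (∫⁻ u in Ioi (0:ℝ),
          (Ioi u).indicator (fun _ => ENNReal.ofReal (Real.exp (-(z * u)))) h) ∂ν := by
      exact lintegral_lintegral_swap hFm.aemeasurable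
    have e4 : ∀ᵐ h ∂(ν.restrict (Ioi (0:ℝ))),
        (∫⁻ u in Ioi (0:ℝ),
          (Ioi u).indicator (fun _ => ENNReal.ofReal (Real.exp (-(z * u)))) h) =
        ENNReal.ofReal ((1 - Real.exp (-(z * h))) / z) := by
      filter_upwards [hν1'] with h hh
      have hpt : ∀ u : ℝ,
          (Ioi u).indicator (fun _ => ENNReal.ofReal (Real.exp (-(z * u)))) h =
          (Iio h).indicator (fun u => ENNReal.ofReal (Real.exp (-(z * u)))) u := by
        intro u
        simp only [Set.indicator, Set.mem_Ioi, Set.mem_Iio]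
      simp_rw [hpt]
      rw [lintegral_indicator measurableSet_Iio, Measure.restrict_restrict measurableSet_Iio]
      have hset : Iio h ∩ Ioi (0:ℝ) = Ioo 0 h := by
        rw [inter_comm, Ioi_inter_Iio]
      rw [hset]
      rw [← ofReal_integral_eq_lintegral_ofReal
        (((expIntegrable hz 0).mono_set Ioo_subset_Ioi_self))
        (ae_of_all _ fun u => Real.exp_nonneg _)]
      rw [← integral_Ioc_eq_integral_Ioo, expIntIoc hz (by linarith : (0:ℝ) ≤ h)]
    rw [e1, setLIntegral_congr_fun measurableSet_Ioi e2, e3,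
      lintegral_congr_ae e4,
      ← ofReal_integral_eq_lintegral_ofReal ((hIνint z hz.le).div_const z) ?_,
      integral_div]
    filter_upwards [hν1'] with h hh
    have h1 : Real.exp (-(z * h)) ≤ 1 := by
      rw [Real.exp_le_one_iff]; nlinarith
    show (0:ℝ) ≤ (1 - Real.exp (-(z * h))) / z
    exact div_nonneg (by linarith) hz.le
  have hexpm : ∀ z : ℝ, Measurable (fun u : ℝ => ENNReal.ofReal (Real.exp (-(z * u)))) :=
    fun z => ENNReal.measurable_ofReal.comp
      (Real.measurable_exp.comp ((measurable_id.const_mul z).neg))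
  have claimA : ∀ z : ℝ, 0 < z →
      ENNReal.ofReal (Φ z / z) = ENNReal.ofReal γ +
        ∫⁻ u in Ioi (0:ℝ), ENNReal.ofReal (Real.exp (-(z * u))) *
          (ν (Ici u) + ENNReal.ofReal lam) := by
    intro z hz
    have hIz := hIνnn z hz.le
    have hsplit : Φ z / z = γ +
        ((∫ h in Ioi (0:ℝ), (1 - Real.exp (-(z * h))) ∂ν) / z + lam / z) := by
      rw [hΦ z hz.le]; field_simp; ring
    have hdistr : ∫⁻ u in Ioi (0:ℝ), ENNReal.ofReal (Real.exp (-(z * u))) *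
          (ν (Ici u) + ENNReal.ofReal lam) =
        (∫⁻ u in Ioi (0:ℝ), ENNReal.ofReal (Real.exp (-(z * u))) * ν (Ici u)) +
        ∫⁻ u in Ioi (0:ℝ), ENNReal.ofReal (Real.exp (-(z * u))) * ENNReal.ofReal lam := by
      simp_rw [mul_add]
      exact lintegral_add_left ((hexpm z).mul hνbmeas) _
    have hlamint : ∫⁻ u in Ioi (0:ℝ), ENNReal.ofReal (Real.exp (-(z * u))) *
        ENNReal.ofReal lam = ENNReal.ofReal (lam / z) := by
      rw [lintegral_mul_const _ (hexpm z)]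
      have h1 : ∫⁻ u in Ioi (0:ℝ), ENNReal.ofReal (Real.exp (-(z * u))) =
          ENNReal.ofReal (1 / z) := by
        rw [← ofReal_integral_eq_lintegral_ofReal (expIntegrable hz 0)
          (ae_of_all _ fun u => Real.exp_nonneg _), expInt hz 0]
        simp
      rw [h1, ← ENNReal.ofReal_mul (by positivity)]
      congr 1
      field_simp
    rw [hsplit, ENNReal.ofReal_add hγ (by positivity),
      ENNReal.ofReal_add (div_nonneg hIz hz.le) (div_nonneg hlam hz.le),
      hdistr, claimB z hz, hlamint]
  have key1 : ∀ x : ℝ, 0 < x → ∀ z ∈ Ioi (0:ℝ),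
      ENNReal.ofReal (Φ z * W₀ z / z * Real.exp (-(z * x))) =
      ENNReal.ofReal γ * ENNReal.ofReal (Real.exp (-(x * z)) * W₀ z) +
      ∫⁻ u in Ioi (0:ℝ), ENNReal.ofReal (Real.exp (-((x + u) * z)) * W₀ z) *
        (ν (Ici u) + ENNReal.ofReal lam) := by
    intro x hx z hz
    have hz' : (0:ℝ) < z := hz
    have haux : Φ z * W₀ z / z * Real.exp (-(z * x)) =
        (Φ z / z) * (Real.exp (-(x * z)) * W₀ z) := by
      rw [show -(z * x) = -(x * z) by ring]; ring
    rw [haux, ENNReal.ofReal_mul (div_nonneg (hΦnn z hz') hz'.le), claimA z hz', add_mul,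
      ← lintegral_mul_const (f := fun u => ENNReal.ofReal (Real.exp (-(z * u))) *
        (ν (Ici u) + ENNReal.ofReal lam)) _ ((hexpm z).mul (hνbmeas.add measurable_const))]
    congr 1
    refine setLIntegral_congr_fun measurableSet_Ioi (fun u hu => ?_)
    rw [mul_right_comm, ← ENNReal.ofReal_mul (Real.exp_nonneg _)]
    congr 2
    rw [← mul_assoc, ← Real.exp_add, show -(z * u) + -(x * z) = -((x + u) * z) by ring]
  have key2 : ∀ x : ℝ, 0 < x →
      ∫⁻ z in Ioi (0:ℝ), ENNReal.ofReal (Φ z * W₀ z / z * Real.exp (-(z * x))) =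
      ENNReal.ofReal γ * ENNReal.ofReal (1 / Sig x) +
      ∫⁻ u in Ioi (0:ℝ), (ν (Ici u) + ENNReal.ofReal lam) *
        ENNReal.ofReal (1 / Sig (x + u)) := by
    intro x hx
    have hzm : ∀ y : ℝ, Measurable (fun z : ℝ => ENNReal.ofReal (Real.exp (-(y * z)) * W₀ z)) :=
      fun y => ENNReal.measurable_ofReal.comp
        ((Real.measurable_exp.comp ((measurable_id.const_mul y).neg)).mul hW₀meas)
    rw [setLIntegral_congr_fun measurableSet_Ioi (key1 x hx),
      lintegral_add_left ((hzm x).const_mul _)]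
    congr 1
    · rw [lintegral_const_mul _ (hzm x), hLap₀ x hx]
    · have hFm : Measurable (Function.uncurry (fun (z u : ℝ) =>
          ENNReal.ofReal (Real.exp (-((x + u) * z)) * W₀ z) *
            (ν (Ici u) + ENNReal.ofReal lam))) := by
        have h1 : Measurable (fun p : ℝ × ℝ =>
            ENNReal.ofReal (Real.exp (-((x + p.2) * p.1)) * W₀ p.1)) :=
          ENNReal.measurable_ofReal.comp
            ((Real.measurable_exp.comp
              (((measurable_snd.const_add x).mul measurable_fst).neg)).mul
              (hW₀meas.comp measurable_fst))
        exact h1.mul ((hνbmeas.comp measurable_snd).add measurable_const)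
      rw [lintegral_lintegral_swap hFm.aemeasurable]
      refine setLIntegral_congr_fun measurableSet_Ioi (fun u hu => ?_)
      have hxu : (0:ℝ) < x + u := add_pos hx hu
      rw [lintegral_mul_const _ (hzm (x + u)), hLap₀ (x + u) hxu, mul_comm]
  -- conversion of the u-integral
  have hofn : ∀ x : ℝ, 0 < x → ∀ u ∈ Ioi (0:ℝ),
      ENNReal.ofReal (((ν (Ici u)).toReal + lam) / Sig (x + u)) =
      (ν (Ici u) + ENNReal.ofReal lam) * ENNReal.ofReal (1 / Sig (x + u)) := by
    intro x hx u hu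
    rw [div_eq_mul_one_div, ENNReal.ofReal_mul (add_nonneg ENNReal.toReal_nonneg hlam),
      ENNReal.ofReal_add ENNReal.toReal_nonneg hlam, ENNReal.ofReal_toReal (hbtop u)]
  have hTfin : ∀ x : ℝ, 0 < x →
      (∫⁻ u in Ioi (0:ℝ), (ν (Ici u) + ENNReal.ofReal lam) *
        ENNReal.ofReal (1 / Sig (x + u))) ≠ ⊤ := by
    intro x hx
    have hCne : ν (Ici (1:ℝ)) + ENNReal.ofReal lam ≠ ⊤ :=
      ENNReal.add_ne_top.mpr ⟨hc, ENNReal.ofReal_ne_top⟩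
    rw [← Ioc_union_Ioi_eq_Ioi (zero_le_one (α := ℝ)),
      lintegral_union measurableSet_Ioi (Ioc_disjoint_Ioi le_rfl)]
    refine ENNReal.add_ne_top.mpr ⟨?_, ?_⟩
    · have hb : ∫⁻ u in Ioc (0:ℝ) 1, (ν (Ici u) + ENNReal.ofReal lam) *
          ENNReal.ofReal (1 / Sig (x + u)) ≤
          ∫⁻ _ in Ioc (0:ℝ) 1, (ν (Ici 1) + ENNReal.ofReal lam) *
            ENNReal.ofReal (1 / Sig x) := by
        refine lintegral_mono_ae ((ae_restrict_iff' measurableSet_Ioc).mpr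
          (ae_of_all _ fun u hu => ?_))
        exact mul_le_mul' (add_le_add_left (hbound u) _)
          (ENNReal.ofReal_le_ofReal (hSi x (x + u) hx (by linarith [hu.1])))
      rw [setLIntegral_const] at hb
      refine ne_top_of_le_ne_top ?_ hb
      exact ENNReal.mul_ne_top (ENNReal.mul_ne_top hCne ENNReal.ofReal_ne_top)
        (by simp [Real.volume_Ioc])
    · have hb : ∫⁻ u in Ioi (1:ℝ), (ν (Ici u) + ENNReal.ofReal lam) *
          ENNReal.ofReal (1 / Sig (x + u)) ≤
          ∫⁻ u in Ioi (1:ℝ), (ν (Ici 1) + ENNReal.ofReal lam) *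
            ENNReal.ofReal (1 / Sig u) := by
        refine lintegral_mono_ae ((ae_restrict_iff' measurableSet_Ioi).mpr
          (ae_of_all _ fun u hu => ?_))
        have hu1 : (1:ℝ) < u := hu
        exact mul_le_mul' (add_le_add_left (hbound u) _)
          (ENNReal.ofReal_le_ofReal (hSi u (x + u) (by linarith) (by linarith)))
      rw [lintegral_const_mul' _ _ hCne] at hb
      refine ne_top_of_le_ne_top ?_ hb
      exact ENNReal.mul_ne_top hCne hIntSig.lintegral_lt_top.ne
  have hfmeasIoi : ∀ x : ℝ, 0 < x → AEStronglyMeasurable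
      (fun u => ((ν (Ici u)).toReal + lam) / Sig (x + u)) (volume.restrict (Ioi 0)) := by
    intro x hx
    have hanti : Antitone (fun u : ℝ => 1 / Sig (x + max u 0)) := by
      intro a b hab
      exact hSi (x + max a 0) (x + max b 0)
        (lt_of_lt_of_le hx (le_add_of_nonneg_right (le_max_right a 0)))
        (add_le_add_right (max_le_max hab le_rfl) x)
    have hBm : AEStronglyMeasurable (fun u => 1 / Sig (x + u)) (volume.restrict (Ioi 0)) := by
      refine (hanti.measurable.aestronglyMeasurable).congr ?_
      filter_upwards [self_mem_ae_restrict measurableSet_Ioi] with u hu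
      have : max u 0 = u := max_eq_left (le_of_lt hu)
      rw [this]
    have heq : (fun u => ((ν (Ici u)).toReal + lam) / Sig (x + u)) =
        fun u => ((ν (Ici u)).toReal + lam) * (1 / Sig (x + u)) := by
      funext u; rw [div_eq_mul_one_div]
    rw [heq]
    exact ((hνbmeas.ennreal_toReal.add measurable_const).aestronglyMeasurable).mul hBm
  have hfnn : ∀ x : ℝ, 0 < x → 0 ≤ᵐ[volume.restrict (Ioi (0:ℝ))]
      (fun u => ((ν (Ici u)).toReal + lam) / Sig (x + u)) := by
    intro x hx
    filter_upwards [self_mem_ae_restrict measurableSet_Ioi] with u hu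
    exact div_nonneg (add_nonneg ENNReal.toReal_nonneg hlam)
      (hSigpos (x + u) (add_pos hx hu)).le
  have hflint : ∀ x : ℝ, 0 < x →
      ∫⁻ u in Ioi (0:ℝ), ENNReal.ofReal (((ν (Ici u)).toReal + lam) / Sig (x + u)) =
      ∫⁻ u in Ioi (0:ℝ), (ν (Ici u) + ENNReal.ofReal lam) *
        ENNReal.ofReal (1 / Sig (x + u)) :=
    fun x hx => setLIntegral_congr_fun measurableSet_Ioi (hofn x hx)
  have hfint : ∀ x : ℝ, 0 < x → IntegrableOn
      (fun u => ((ν (Ici u)).toReal + lam) / Sig (x + u)) (Ioi 0) := by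
    intro x hx
    refine ⟨hfmeasIoi x hx, (hasFiniteIntegral_iff_ofReal (hfnn x hx)).mpr ?_⟩
    rw [hflint x hx]
    exact (hTfin x hx).lt_top
  have hfRI : ∀ x : ℝ, 0 < x →
      ∫ u in Ioi (0:ℝ), ((ν (Ici u)).toReal + lam) / Sig (x + u) =
      (∫⁻ u in Ioi (0:ℝ), (ν (Ici u) + ENNReal.ofReal lam) *
        ENNReal.ofReal (1 / Sig (x + u))).toReal := by
    intro x hx
    rw [integral_eq_lintegral_of_nonneg_ae (hfnn x hx) (hfmeasIoi x hx), hflint x hx]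
  -- measurability of Φ on (0, ∞)
  have hΦmeas : AEStronglyMeasurable Φ (volume.restrict (Ioi 0)) := by
    have hmJ : Measurable (fun z : ℝ =>
        ∫⁻ h in Ioi (0:ℝ), ENNReal.ofReal (1 - Real.exp (-(z * h))) ∂ν) := by
      refine Measurable.lintegral_prod_right'
        (f := fun p : ℝ × ℝ => ENNReal.ofReal (1 - Real.exp (-(p.1 * p.2)))) ?_
      exact ENNReal.measurable_ofReal.comp
        ((measurable_const.sub
          (Real.measurable_exp.comp ((measurable_fst.mul measurable_snd).neg))))
    have hg : Measurable (fun z : ℝ => γ * z +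
        (∫⁻ h in Ioi (0:ℝ), ENNReal.ofReal (1 - Real.exp (-(z * h))) ∂ν).toReal + lam) :=
      (((measurable_id.const_mul γ).add hmJ.ennreal_toReal).add measurable_const)
    refine (hg.aestronglyMeasurable).congr ?_
    filter_upwards [self_mem_ae_restrict measurableSet_Ioi] with z hz
    have hz' : (0:ℝ) < z := hz
    have hrepr : ∫ h in Ioi (0:ℝ), (1 - Real.exp (-(z * h))) ∂ν =
        (∫⁻ h in Ioi (0:ℝ), ENNReal.ofReal (1 - Real.exp (-(z * h))) ∂ν).toReal := by
      refine integral_eq_lintegral_of_nonneg_ae ?_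
        ((continuous_const.sub (Real.continuous_exp.comp
          ((continuous_const.mul continuous_id).neg))).aestronglyMeasurable)
      filter_upwards [hν1'] with h hh
      have h1 : Real.exp (-(z * h)) ≤ 1 := by
        rw [Real.exp_le_one_iff]; nlinarith
      show (0:ℝ) ≤ 1 - Real.exp (-(z * h))
      linarith
    rw [hΦ z hz'.le, hrepr]
  have hLI : ∀ x : ℝ, 0 < x →
      ∫ z in Ioi (0:ℝ), Φ z * W z / z * Real.exp (-(z * x)) =
      (∫⁻ z in Ioi (0:ℝ), ENNReal.ofReal (Φ z * W₀ z / z * Real.exp (-(z * x)))).toReal := by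
    intro x hx
    have hcg : ∫ z in Ioi (0:ℝ), Φ z * W z / z * Real.exp (-(z * x)) =
        ∫ z in Ioi (0:ℝ), Φ z * W₀ z / z * Real.exp (-(z * x)) := by
      refine integral_congr_ae ?_
      filter_upwards [hW₀ae] with z hz
      rw [hz]
    rw [hcg]
    refine integral_eq_lintegral_of_nonneg_ae ?_ ?_
    · filter_upwards [self_mem_ae_restrict measurableSet_Ioi] with z hz
      have hz' : (0:ℝ) < z := hz
      exact mul_nonneg (div_nonneg (mul_nonneg (hΦnn z hz') (hW₀nn z)) hz'.le)
        (Real.exp_nonneg _)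
    · simp_rw [div_eq_mul_inv]
      exact ((hΦmeas.mul hW₀meas.aestronglyMeasurable).mul
        measurable_inv.aestronglyMeasurable).mul
        ((Real.continuous_exp.comp
          ((continuous_id.mul continuous_const).neg)).aestronglyMeasurable)
  -- the main identity
  have key : ∀ x > (0:ℝ),
      x * ∫ z in Ioi (0:ℝ), Φ z * W z / z * Real.exp (-(z * x)) =
        γ * x / Sig x + x * ∫ u in Ioi (0:ℝ), ((ν (Ici u)).toReal + lam) / Sig (x + u) := by
    intro x hx
    rw [hLI x hx, key2 x hx,
      ENNReal.toReal_add (ENNReal.mul_ne_top ENNReal.ofReal_ne_top ENNReal.ofReal_ne_top)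
        (hTfin x hx),
      ENNReal.toReal_mul, ENNReal.toReal_ofReal hγ,
      ENNReal.toReal_ofReal (one_div_nonneg.mpr (hSigpos x hx).le),
      ← hfRI x hx]
    ring
  refine ⟨key, ?_⟩
  -- splitting the integral at 1
  have hsplitInt : ∀ x : ℝ, 0 < x →
      ∫ u in Ioi (0:ℝ), ((ν (Ici u)).toReal + lam) / Sig (x + u) =
      (∫ u in Ioc (0:ℝ) 1, ((ν (Ici u)).toReal + lam) / Sig (x + u)) +
      ∫ u in Ioi (1:ℝ), ((ν (Ici u)).toReal + lam) / Sig (x + u) := by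
    intro x hx
    rw [← setIntegral_union (Ioc_disjoint_Ioi le_rfl) measurableSet_Ioi
      ((hfint x hx).mono_set Ioc_subset_Ioi_self)
      ((hfint x hx).mono_set (Ioi_subset_Ioi zero_le_one)),
      Ioc_union_Ioi_eq_Ioi (zero_le_one (α := ℝ))]
  have hIocBound : ∀ x : ℝ, 0 < x →
      ∫ u in Ioc (0:ℝ) 1, ((ν (Ici u)).toReal + lam) / Sig (x + u) ≤
      ((ν (Ici (1:ℝ))).toReal + lam) * (1 / Sig x) := by
    intro x hx
    have h1 : ∫ u in Ioc (0:ℝ) 1, ((ν (Ici u)).toReal + lam) / Sig (x + u) ≤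
        ∫ _ in Ioc (0:ℝ) 1, ((ν (Ici (1:ℝ))).toReal + lam) * (1 / Sig x) := by
      refine setIntegral_mono_on ((hfint x hx).mono_set Ioc_subset_Ioi_self)
        (integrableOn_const measure_Ioc_lt_top.ne) measurableSet_Ioc
        (fun u hu => ?_)
      rw [div_eq_mul_one_div]
      refine mul_le_mul (add_le_add_left (ENNReal.toReal_mono hc (hbound u)) lam)
        (hSi x (x + u) hx (le_add_of_nonneg_right hu.1.le))
        (one_div_nonneg.mpr (hSigpos (x + u) (by linarith [hu.1])).le)
        (add_nonneg ENNReal.toReal_nonneg hlam)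
    rw [setIntegral_const] at h1
    calc ∫ u in Ioc (0:ℝ) 1, ((ν (Ici u)).toReal + lam) / Sig (x + u) ≤ _ := h1
      _ = ((ν (Ici (1:ℝ))).toReal + lam) * (1 / Sig x) := by
        simp [Real.volume_Ioc]
  have hIocnn : ∀ x : ℝ, 0 < x →
      0 ≤ ∫ u in Ioc (0:ℝ) 1, ((ν (Ici u)).toReal + lam) / Sig (x + u) := by
    intro x hx
    refine setIntegral_nonneg measurableSet_Ioc (fun u hu => ?_)
    exact div_nonneg (add_nonneg ENNReal.toReal_nonneg hlam)
      (hSigpos (x + u) (by linarith [hu.1])).le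
  -- the difference tends to 0
  have hPQ : Tendsto (fun x =>
      (x * ∫ z in Ioi (0:ℝ), Φ z * W z / z * Real.exp (-(z * x))) -
      (x * ∫ u in Ioi (1:ℝ), ((ν (Ici u)).toReal + lam) / Sig (x + u))) atTop (𝓝 0) := by
    set D : ℝ := γ + ((ν (Ici (1:ℝ))).toReal + lam) with hD
    refine squeeze_zero' ?_ ?_ (g := fun x => D * (x / Sig x)) ?_
    · filter_upwards [eventually_gt_atTop (0:ℝ)] with x hx
      have e1 : (x * ∫ z in Ioi (0:ℝ), Φ z * W z / z * Real.exp (-(z * x))) -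
          (x * ∫ u in Ioi (1:ℝ), ((ν (Ici u)).toReal + lam) / Sig (x + u)) =
          γ * x / Sig x + x * ∫ u in Ioc (0:ℝ) 1, ((ν (Ici u)).toReal + lam) / Sig (x + u) := by
        rw [key x hx, hsplitInt x hx]; ring
      rw [e1]
      have h2 : 0 ≤ γ * x / Sig x :=
        div_nonneg (mul_nonneg hγ hx.le) (hSigpos x hx).le
      have h3 : 0 ≤ x * ∫ u in Ioc (0:ℝ) 1, ((ν (Ici u)).toReal + lam) / Sig (x + u) :=
        mul_nonneg hx.le (hIocnn x hx)
      linarith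
    · filter_upwards [eventually_gt_atTop (0:ℝ)] with x hx
      have e1 : (x * ∫ z in Ioi (0:ℝ), Φ z * W z / z * Real.exp (-(z * x))) -
          (x * ∫ u in Ioi (1:ℝ), ((ν (Ici u)).toReal + lam) / Sig (x + u)) =
          γ * x / Sig x + x * ∫ u in Ioc (0:ℝ) 1, ((ν (Ici u)).toReal + lam) / Sig (x + u) := by
        rw [key x hx, hsplitInt x hx]; ring
      rw [e1]
      have h2 : x * ∫ u in Ioc (0:ℝ) 1, ((ν (Ici u)).toReal + lam) / Sig (x + u) ≤
          x * (((ν (Ici (1:ℝ))).toReal + lam) * (1 / Sig x)) :=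
        mul_le_mul_of_nonneg_left (hIocBound x hx) hx.le
      have h3 : γ * x / Sig x = γ * (x / Sig x) := by ring
      have h4 : x * (((ν (Ici (1:ℝ))).toReal + lam) * (1 / Sig x)) =
          ((ν (Ici (1:ℝ))).toReal + lam) * (x / Sig x) := by ring
      rw [hD]
      nlinarith [h2, h3.le, h4]
    · have := hxo.const_mul D
      simpa using this
  obtain ⟨hli, hls⟩ := lim_eq_of_sub_tendsto_zero hPQ
  exact ⟨hli, hls⟩
end

section
/- Let Φ̂ be a Bernstein function with ∫_0^1 du/Φ̂(u) < ∞, η a measure on (0,∞) with ∫₀^∞ (u ∧ u²) η(du) < ∞ and η̄(u) = η([u,∞)). If limsup_{x→0⁺} x Φ̂'(x)/Φ̂(x)² < ∞, then limsup_{x→0⁺} x ∫₀^∞ η̄(u) (1/Φ̂(x) − 1/Φ̂(x+u)) du = 0. -/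
open MeasureTheory Filter Set Topology
open scoped ENNReal NNReal

private lemma secant_anti' {Φ : ℝ → ℝ} (hΦconc : ConcaveOn ℝ (Ici 0) Φ)
    {a z w : ℝ} (ha : 0 ≤ a) (hz : 0 ≤ z) (hw : 0 ≤ w) (hza : z ≠ a) (hwa : w ≠ a)
    (hzw : z ≤ w) : (Φ w - Φ a) / (w - a) ≤ (Φ z - Φ a) / (z - a) := by
  have h := hΦconc.neg.secant_mono (mem_Ici.2 ha) (mem_Ici.2 hz) (mem_Ici.2 hw) hza hwa hzw
  simp only [Pi.neg_apply] at h
  have e1 : -Φ z - -Φ a = -(Φ z - Φ a) := by ring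
  have e2 : -Φ w - -Φ a = -(Φ w - Φ a) := by ring
  rw [e1, e2, neg_div, neg_div, neg_le_neg_iff] at h
  exact h

private lemma slope_bounds {Φ D : ℝ → ℝ}
    (hΦconc : ConcaveOn ℝ (Ici 0) Φ)
    (hD : ∀ x > (0:ℝ), HasDerivAt Φ (D x) x) {x y : ℝ} (hx : 0 < x) (hxy : x < y) :
    (Φ y - Φ x) / (y - x) ≤ D x ∧ D y ≤ (Φ y - Φ x) / (y - x) := by
  constructor
  · have tends : Tendsto (slope Φ x) (𝓝[>] x) (𝓝 (D x)) :=
      (hasDerivAt_iff_tendsto_slope.1 (hD x hx)).mono_left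
        (nhdsWithin_mono _ fun z hz => ne_of_gt hz)
    refine ge_of_tendsto tends ?_
    filter_upwards [Ioc_mem_nhdsGT hxy] with z hz
    rw [slope_def_field]
    exact secant_anti' hΦconc hx.le (hx.trans hz.1).le (hx.trans hxy).le
      (ne_of_gt hz.1) (ne_of_gt hxy) hz.2
  · have hy : 0 < y := hx.trans hxy
    have tends : Tendsto (slope Φ y) (𝓝[<] y) (𝓝 (D y)) :=
      (hasDerivAt_iff_tendsto_slope.1 (hD y hy)).mono_left
        (nhdsWithin_mono _ fun z hz => ne_of_lt hz)
    refine le_of_tendsto tends ?_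
    filter_upwards [Ico_mem_nhdsLT_of_mem ⟨hxy, le_refl y⟩] with z hz
    rw [slope_def_field]
    have h := secant_anti' hΦconc hy.le hx.le (hx.trans_le hz.1).le
      (ne_of_lt hxy) (ne_of_lt hz.2) hz.1
    calc (Φ z - Φ y) / (z - y) ≤ (Φ x - Φ y) / (x - y) := h
    _ = (Φ y - Φ x) / (y - x) := by rw [← neg_sub (Φ y), ← neg_sub y, neg_div_neg_eq]

private lemma D_nonneg {Φ D : ℝ → ℝ}
    (hΦmono : MonotoneOn Φ (Ici 0)) (hΦconc : ConcaveOn ℝ (Ici 0) Φ)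
    (hD : ∀ x > (0:ℝ), HasDerivAt Φ (D x) x) {x : ℝ} (hx : 0 < x) : 0 ≤ D x := by
  have h := (slope_bounds hΦconc hD hx (lt_add_one x)).1
  refine le_trans ?_ h
  apply div_nonneg _ (by linarith)
  have := hΦmono (mem_Ici.2 hx.le) (mem_Ici.2 (by linarith : (0:ℝ) ≤ x + 1)) (by linarith)
  linarith

private lemma D_anti {Φ D : ℝ → ℝ}
    (hΦconc : ConcaveOn ℝ (Ici 0) Φ)
    (hD : ∀ x > (0:ℝ), HasDerivAt Φ (D x) x) {x y : ℝ} (hx : 0 < x) (hxy : x ≤ y) :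
    D y ≤ D x := by
  rcases eq_or_lt_of_le hxy with rfl | h
  · exact le_rfl
  · exact le_trans (slope_bounds hΦconc hD hx h).2 (slope_bounds hΦconc hD hx h).1

private lemma key_ineq {Φ D : ℝ → ℝ}
    (hΦpos : ∀ x > (0:ℝ), 0 < Φ x) (hΦmono : MonotoneOn Φ (Ici 0))
    (hΦconc : ConcaveOn ℝ (Ici 0) Φ)
    (hD : ∀ x > (0:ℝ), HasDerivAt Φ (D x) x)
    (hDanti : ∀ {x y : ℝ}, 0 < x → x ≤ y → D y ≤ D x)
    (hDnn : ∀ {x : ℝ}, 0 < x → 0 ≤ D x)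
    {x u : ℝ} (hx : 0 < x) (hu : 0 < u) :
    0 ≤ 1 / Φ x - 1 / Φ (x + u) ∧ 1 / Φ x - 1 / Φ (x + u) ≤ u * (D x / Φ x ^ 2)
      ∧ 1 / Φ x - 1 / Φ (x + u) ≤ 1 / Φ x := by
  have hxu : 0 < x + u := by linarith
  have hΦx := hΦpos x hx
  have hΦxu := hΦpos _ hxu
  have hmono : Φ x ≤ Φ (x + u) :=
    hΦmono (mem_Ici.2 hx.le) (mem_Ici.2 hxu.le) (by linarith)
  refine ⟨by have := one_div_le_one_div_of_le hΦx hmono; linarith, ?_, ?_⟩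
  · -- MVT
    set g : ℝ → ℝ := fun y => (Φ y)⁻¹ with hg
    have hgd : ∀ y ∈ Ioo x (x + u), HasDerivAt g (-D y / Φ y ^ 2) y := by
      intro y hy
      exact (hD y (hx.trans hy.1)).inv (ne_of_gt (hΦpos y (hx.trans hy.1)))
    have hgc : ContinuousOn g (Icc x (x + u)) := by
      intro y hy
      have hy0 : 0 < y := lt_of_lt_of_le hx hy.1
      exact ((hD y hy0).continuousAt.continuousWithinAt).inv₀ (ne_of_gt (hΦpos y hy0))
    obtain ⟨c, hc, hceq⟩ := exists_hasDerivAt_eq_slope g (fun y => -D y / Φ y ^ 2)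
      (by linarith : x < x + u) hgc hgd
    have hcx : x < c := hc.1
    have hΦc := hΦpos c (hx.trans hcx)
    have hceq' : g x - g (x + u) = u * (D c / Φ c ^ 2) := by
      have h2 : -D c / Φ c ^ 2 = (g (x + u) - g x) / u := by
        rw [hceq]; ring_nf
      have hu' : u ≠ 0 := ne_of_gt hu
      field_simp at h2 ⊢
      nlinarith [h2]
    have hle : D c / Φ c ^ 2 ≤ D x / Φ x ^ 2 := by
      apply div_le_div₀ (hDnn hx) (hDanti hx hcx.le) (by positivity)
      have := hΦmono (mem_Ici.2 hx.le) (mem_Ici.2 (hx.trans hcx).le) hcx.le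
      nlinarith [hΦx]
    have : 1 / Φ x - 1 / Φ (x + u) = g x - g (x + u) := by
      simp [hg, one_div]
    rw [this, hceq']
    exact mul_le_mul_of_nonneg_left hle hu.le
  · have : 0 ≤ 1 / Φ (x + u) := by positivity
    linarith
private lemma eta_mble (η : Measure ℝ) : Measurable fun u : ℝ => η (Ici u) :=
  Antitone.measurable (fun _ _ huv => measure_mono (Ici_subset_Ici.2 huv))

private lemma eta_fin {η : Measure ℝ}
    (hη : ∫⁻ u in Ioi (0:ℝ), ENNReal.ofReal (min u (u ^ 2)) ∂η ≠ ⊤)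
    {u : ℝ} (hu : 0 < u) : η (Ici u) ≠ ⊤ := by
  have hsub : Ici u ⊆ Ioi (0:ℝ) := fun z hz => lt_of_lt_of_le hu hz
  have hbound : ENNReal.ofReal (min u (u ^ 2)) * η (Ici u)
      ≤ ∫⁻ v in Ioi (0:ℝ), ENNReal.ofReal (min v (v ^ 2)) ∂η := by
    calc ENNReal.ofReal (min u (u ^ 2)) * η (Ici u)
        = ∫⁻ _ in Ici u, ENNReal.ofReal (min u (u ^ 2)) ∂η := (setLIntegral_const _ _).symm
      _ ≤ ∫⁻ v in Ici u, ENNReal.ofReal (min v (v ^ 2)) ∂η := by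
          refine setLIntegral_mono
            (ENNReal.measurable_ofReal.comp ((continuous_id.min (continuous_pow 2)).measurable))
            (fun v hv => ?_)
          refine ENNReal.ofReal_le_ofReal (le_min ?_ ?_)
          · exact le_trans (min_le_left _ _) hv
          · exact le_trans (min_le_right _ _) (by nlinarith [mem_Ici.1 hv, hu])
      _ ≤ ∫⁻ v in Ioi (0:ℝ), ENNReal.ofReal (min v (v ^ 2)) ∂η := lintegral_mono_set hsub
  intro htop
  apply hη
  refine top_unique ?_
  rw [htop, ENNReal.mul_top] at hbound
  · exact hbound
  · simp only [ne_eq, ENNReal.ofReal_eq_zero, not_le]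
    exact lt_min hu (by positivity)

private lemma layercake_fin {η : Measure ℝ}
    (hη : ∫⁻ u in Ioi (0:ℝ), ENNReal.ofReal (min u (u ^ 2)) ∂η ≠ ⊤) :
    ∫⁻ t in Ioi (0:ℝ), η (Ici t) * ENNReal.ofReal (min t 1) ∂volume ≠ ⊤ := by
  have f_nn : 0 ≤ᵐ[η.restrict (Ioi 0)] (id : ℝ → ℝ) := by
    filter_upwards [ae_restrict_mem measurableSet_Ioi] with v hv using le_of_lt hv
  have g_intble : ∀ t > (0:ℝ), IntervalIntegrable (fun s => min s 1) volume 0 t :=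
    fun t _ => (continuous_id.min continuous_const).intervalIntegrable _ _
  have g_nn : ∀ᵐ t ∂(volume.restrict (Ioi (0:ℝ))), 0 ≤ min t 1 := by
    filter_upwards [ae_restrict_mem measurableSet_Ioi] with t ht using le_min ht.le zero_le_one
  have hlc := lintegral_comp_eq_lintegral_meas_le_mul (η.restrict (Ioi 0))
    f_nn aemeasurable_id g_intble g_nn
  have hmeas : ∀ t ∈ Ioi (0:ℝ),
      (η.restrict (Ioi 0)) {a : ℝ | t ≤ a} = η (Ici t) := by
    intro t ht
    have h0 : {a : ℝ | t ≤ a} = Ici t := rfl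
    have h1 : Ici t ∩ Ioi (0:ℝ) = Ici t :=
      inter_eq_left.2 (fun z (hz : z ∈ Ici t) => mem_Ioi.2 (lt_of_lt_of_le ht hz))
    rw [h0, Measure.restrict_apply measurableSet_Ici, h1]
  have hR : ∫⁻ t in Ioi (0:ℝ), η (Ici t) * ENNReal.ofReal (min t 1) ∂volume
      = ∫⁻ v, ENNReal.ofReal (∫ t in (0:ℝ)..(id v), min t 1) ∂(η.restrict (Ioi 0)) := by
    rw [hlc]
    exact setLIntegral_congr_fun measurableSet_Ioi
      (fun t ht => by simp only [id_eq]; rw [hmeas t ht])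
  rw [hR]
  have hGle : ∀ v ∈ Ioi (0:ℝ),
      ENNReal.ofReal (∫ t in (0:ℝ)..v, min t 1) ≤ ENNReal.ofReal (min v (v ^ 2)) := by
    intro v hv
    have hv0 : (0:ℝ) ≤ v := (mem_Ioi.1 hv).le
    have hint1 : IntervalIntegrable (fun s => min s 1) volume 0 v :=
      (continuous_id.min continuous_const).intervalIntegrable _ _
    have h1 : ∫ t in (0:ℝ)..v, min t 1 ≤ ∫ t in (0:ℝ)..v, (1:ℝ) := by
      refine intervalIntegral.integral_mono_on hv0 hint1 intervalIntegrable_const ?_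
      intro t _; exact min_le_right _ _
    have h2 : ∫ t in (0:ℝ)..v, min t 1 ≤ ∫ t in (0:ℝ)..v, t := by
      refine intervalIntegral.integral_mono_on hv0 hint1
        (continuous_id.intervalIntegrable _ _) ?_
      intro t _; exact min_le_left _ _
    rw [intervalIntegral.integral_const] at h1
    rw [integral_id] at h2
    refine ENNReal.ofReal_le_ofReal (le_min ?_ ?_)
    · simpa using h1
    · nlinarith [h2]
  refine ne_top_of_le_ne_top hη ?_
  refine lintegral_mono_ae ?_
  filter_upwards [ae_restrict_mem measurableSet_Ioi] with v hv using hGle v hv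
private lemma A1_fin {η : Measure ℝ}
    (hK : ∫⁻ t in Ioi (0:ℝ), η (Ici t) * ENNReal.ofReal (min t 1) ∂volume ≠ ⊤) :
    ∫⁻ t in Ioo (0:ℝ) 1, ENNReal.ofReal t * η (Ici t) ∂volume ≠ ⊤ := by
  refine ne_top_of_le_ne_top hK ?_
  calc ∫⁻ t in Ioo (0:ℝ) 1, ENNReal.ofReal t * η (Ici t) ∂volume
      ≤ ∫⁻ t in Ioo (0:ℝ) 1, η (Ici t) * ENNReal.ofReal (min t 1) ∂volume := by
        refine setLIntegral_mono ((eta_mble η).mul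
          (ENNReal.measurable_ofReal.comp (continuous_id.min continuous_const).measurable)) ?_
        intro t ht
        rw [min_eq_left ht.2.le, mul_comm]
    _ ≤ _ := lintegral_mono_set (fun t ht => ht.1)

private lemma B_fin {η : Measure ℝ}
    (hK : ∫⁻ t in Ioi (0:ℝ), η (Ici t) * ENNReal.ofReal (min t 1) ∂volume ≠ ⊤)
    {δ : ℝ} (hδ : 0 < δ) : ∫⁻ t in Ici δ, η (Ici t) ∂volume ≠ ⊤ := by
  have hne : ENNReal.ofReal (min δ 1) ≠ 0 := by
    simp only [ne_eq, ENNReal.ofReal_eq_zero, not_le]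
    exact lt_min hδ one_pos
  have hmul : (∫⁻ t in Ici δ, η (Ici t) ∂volume) * ENNReal.ofReal (min δ 1)
      ≤ ∫⁻ t in Ioi (0:ℝ), η (Ici t) * ENNReal.ofReal (min t 1) ∂volume := by
    rw [← lintegral_mul_const _ (eta_mble η)]
    calc ∫⁻ t in Ici δ, η (Ici t) * ENNReal.ofReal (min δ 1) ∂volume
        ≤ ∫⁻ t in Ici δ, η (Ici t) * ENNReal.ofReal (min t 1) ∂volume := by
          refine setLIntegral_mono ((eta_mble η).mul
            (ENNReal.measurable_ofReal.comp (continuous_id.min continuous_const).measurable)) ?_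
          intro t ht
          exact mul_le_mul_right (ENNReal.ofReal_le_ofReal
            (min_le_min (mem_Ici.1 ht) le_rfl)) _
      _ ≤ _ := lintegral_mono_set (fun t ht => lt_of_lt_of_le hδ ht)
  intro htop
  rw [htop, ENNReal.top_mul hne] at hmul
  exact hK (top_unique hmul)

private lemma A_small {η : Measure ℝ}
    (hA1 : ∫⁻ t in Ioo (0:ℝ) 1, ENNReal.ofReal t * η (Ici t) ∂volume ≠ ⊤)
    {ε : ℝ} (hε : 0 < ε) :
    ∃ δ : ℝ, 0 < δ ∧ δ ≤ 1 ∧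
      (∫⁻ t in Ioo (0:ℝ) δ, ENNReal.ofReal t * η (Ici t) ∂volume).toReal ≤ ε := by
  have hA1' : ∫⁻ t, ENNReal.ofReal t * η (Ici t) ∂(volume.restrict (Ioo (0:ℝ) 1)) ≠ ⊤ := hA1
  obtain ⟨δ₀, hδ₀, hsm⟩ := exists_pos_setLIntegral_lt_of_measure_lt hA1'
    (ENNReal.ofReal_pos.2 hε).ne'
  set d : ℝ≥0∞ := min 1 δ₀ with hd
  have hd0 : 0 < d := lt_min one_pos hδ₀
  have hdt : d ≠ ⊤ := ne_top_of_le_ne_top ENNReal.one_ne_top (min_le_left _ _)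
  set δ : ℝ := d.toReal / 2 with hδdef
  have hdtr : 0 < d.toReal := ENNReal.toReal_pos hd0.ne' hdt
  have hδpos : 0 < δ := by positivity
  have hδ1 : δ ≤ 1 := by
    have : d.toReal ≤ 1 := by
      rw [← ENNReal.toReal_one]
      exact ENNReal.toReal_mono ENNReal.one_ne_top (min_le_left _ _)
    simp only [hδdef]; linarith
  refine ⟨δ, hδpos, hδ1, ?_⟩
  have hmeas : (volume.restrict (Ioo (0:ℝ) 1)) (Ioo 0 δ) < δ₀ := by
    rw [Measure.restrict_apply measurableSet_Ioo]
    calc volume (Ioo 0 δ ∩ Ioo (0:ℝ) 1) ≤ volume (Ioo (0:ℝ) δ) :=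
          measure_mono inter_subset_left
      _ = ENNReal.ofReal δ := by rw [Real.volume_Ioo, sub_zero]
      _ < d := by
          rw [← ENNReal.ofReal_toReal hdt]
          exact ENNReal.ofReal_lt_ofReal_iff_of_nonneg hδpos.le |>.2 (by linarith)
      _ ≤ δ₀ := min_le_right _ _
  have hval := hsm _ hmeas
  have hrw : ∫⁻ t in Ioo (0:ℝ) δ, ENNReal.ofReal t * η (Ici t)
        ∂(volume.restrict (Ioo (0:ℝ) 1))
      = ∫⁻ t in Ioo (0:ℝ) δ, ENNReal.ofReal t * η (Ici t) ∂volume := by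
    rw [Measure.restrict_restrict measurableSet_Ioo,
      inter_eq_left.2 (Ioo_subset_Ioo_right hδ1)]
  rw [hrw] at hval
  exact ENNReal.toReal_le_of_le_ofReal hε.le hval.le
private lemma x_div_phi_small {Φ : ℝ → ℝ}
    (hΦpos : ∀ x > (0:ℝ), 0 < Φ x) (hΦmono : MonotoneOn Φ (Ici 0))
    (hint : IntegrableOn (fun u => 1 / Φ u) (Ioo 0 1)) {ε : ℝ} (hε : 0 < ε) :
    ∀ᶠ x in 𝓝[>] (0:ℝ), x / Φ x < ε := by
  have hI : ∫⁻ u, ENNReal.ofReal (1 / Φ u) ∂(volume.restrict (Ioo (0:ℝ) 1)) ≠ ⊤ := by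
    refine ne_top_of_le_ne_top hint.2.ne ?_
    exact lintegral_mono fun u => Real.ofReal_le_enorm _
  obtain ⟨δ₀, hδ₀, hsm⟩ := exists_pos_setLIntegral_lt_of_measure_lt hI
    (ENNReal.ofReal_pos.2 (by linarith : (0:ℝ) < ε / 2)).ne'
  set d : ℝ≥0∞ := min 1 δ₀ with hd
  have hd0 : 0 < d := lt_min one_pos hδ₀
  have hdt : d ≠ ⊤ := ne_top_of_le_ne_top ENNReal.one_ne_top (min_le_left _ _)
  set δ : ℝ := d.toReal / 2 with hδdef
  have hdtr : 0 < d.toReal := ENNReal.toReal_pos hd0.ne' hdt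
  have hδpos : 0 < δ := by positivity
  have hδ1 : δ ≤ 1 := by
    have : d.toReal ≤ 1 := by
      rw [← ENNReal.toReal_one]
      exact ENNReal.toReal_mono ENNReal.one_ne_top (min_le_left _ _)
    simp only [hδdef]; linarith
  have hmeas : (volume.restrict (Ioo (0:ℝ) 1)) (Ioo 0 δ) < δ₀ := by
    rw [Measure.restrict_apply measurableSet_Ioo]
    calc volume (Ioo 0 δ ∩ Ioo (0:ℝ) 1) ≤ volume (Ioo (0:ℝ) δ) :=
          measure_mono inter_subset_left
      _ = ENNReal.ofReal δ := by rw [Real.volume_Ioo, sub_zero]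
      _ < d := by
          rw [← ENNReal.ofReal_toReal hdt]
          exact ENNReal.ofReal_lt_ofReal_iff_of_nonneg hδpos.le |>.2 (by linarith)
      _ ≤ δ₀ := min_le_right _ _
  have hval := hsm _ hmeas
  have hrw : ∫⁻ u in Ioo (0:ℝ) δ, ENNReal.ofReal (1 / Φ u)
        ∂(volume.restrict (Ioo (0:ℝ) 1))
      = ∫⁻ u in Ioo (0:ℝ) δ, ENNReal.ofReal (1 / Φ u) ∂volume := by
    rw [Measure.restrict_restrict measurableSet_Ioo,
      inter_eq_left.2 (Ioo_subset_Ioo_right hδ1)]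
  rw [hrw] at hval
  filter_upwards [Ioo_mem_nhdsGT_of_mem (⟨le_rfl, hδpos⟩ : (0:ℝ) ∈ Ico 0 δ)] with x hx
  have hx0 : 0 < x := hx.1
  have hΦx := hΦpos x hx0
  have hlow : ENNReal.ofReal (1 / Φ x * (x / 2))
      ≤ ∫⁻ u in Ioo (0:ℝ) δ, ENNReal.ofReal (1 / Φ u) ∂volume := by
    calc ENNReal.ofReal (1 / Φ x * (x / 2))
        = ENNReal.ofReal (1 / Φ x) * ENNReal.ofReal (x - x / 2) := by
          rw [← ENNReal.ofReal_mul (by positivity)]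
          congr 1; ring
      _ = ENNReal.ofReal (1 / Φ x) * volume (Ioo (x / 2) x) := by
          rw [Real.volume_Ioo]
      _ = ∫⁻ _ in Ioo (x / 2) x, ENNReal.ofReal (1 / Φ x) ∂volume :=
          (setLIntegral_const _ _).symm
      _ ≤ ∫⁻ u in Ioo (x / 2) x, ENNReal.ofReal (1 / Φ u) ∂volume := by
          refine lintegral_mono_ae ?_
          filter_upwards [ae_restrict_mem measurableSet_Ioo] with u hu
          refine ENNReal.ofReal_le_ofReal ?_
          refine one_div_le_one_div_of_le (hΦpos u (by linarith [hu.1] : 0 < u)) ?_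
          exact hΦmono (mem_Ici.2 (by linarith [hu.1])) (mem_Ici.2 hx0.le) hu.2.le
      _ ≤ ∫⁻ u in Ioo (0:ℝ) δ, ENNReal.ofReal (1 / Φ u) ∂volume := by
          refine lintegral_mono_set ?_
          intro u hu
          exact ⟨by linarith [hu.1], lt_trans hu.2 hx.2⟩
  have hlt : 1 / Φ x * (x / 2) < ε / 2 :=
    (ENNReal.ofReal_lt_ofReal_iff (by linarith)).1 (lt_of_le_of_lt hlow hval)
  have hxx : x / Φ x = 2 * (1 / Φ x * (x / 2)) := by field_simp
  rw [hxx]; linarith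
private lemma main_ev {Φ D : ℝ → ℝ} {η : Measure ℝ}
    (hΦpos : ∀ x > (0:ℝ), 0 < Φ x) (hΦmono : MonotoneOn Φ (Ici 0))
    (hΦconc : ConcaveOn ℝ (Ici 0) Φ)
    (hD : ∀ x > (0:ℝ), HasDerivAt Φ (D x) x)
    (hη : ∫⁻ u in Ioi (0:ℝ), ENNReal.ofReal (min u (u ^ 2)) ∂η ≠ ⊤)
    (hint : IntegrableOn (fun u => 1 / Φ u) (Ioo 0 1))
    (hbdd : ∃ C : ℝ, ∀ᶠ x in 𝓝[>] (0:ℝ), x * D x / (Φ x) ^ 2 ≤ C)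
    {ε : ℝ} (hε : 0 < ε) :
    ∀ᶠ x in 𝓝[>] (0:ℝ),
      x * ∫ u in Ioi (0:ℝ), (η (Ici u)).toReal * (1 / Φ x - 1 / Φ (x + u)) ≤ ε := by
  have hDnn : ∀ {x : ℝ}, 0 < x → 0 ≤ D x := fun hx => D_nonneg hΦmono hΦconc hD hx
  have hDanti : ∀ {x y : ℝ}, 0 < x → x ≤ y → D y ≤ D x := fun hx hxy => D_anti hΦconc hD hx hxy
  have hfin : ∀ {u : ℝ}, 0 < u → η (Ici u) ≠ ⊤ := fun hu => eta_fin hη hu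
  have hK := layercake_fin hη
  have hA1 := A1_fin hK
  obtain ⟨C, hC⟩ := hbdd
  set C' := max C 0 with hC'def
  have hC'nn : (0:ℝ) ≤ C' := le_max_right _ _
  have hCev : ∀ᶠ x in 𝓝[>] (0:ℝ), x * D x / Φ x ^ 2 ≤ C' :=
    hC.mono fun x h => le_trans h (le_max_left _ _)
  obtain ⟨δ, hδ0, hδ1, hAδ⟩ := A_small hA1 (show (0:ℝ) < ε / (2 * (C' + 1)) by positivity)
  set Aδ := ∫⁻ t in Ioo (0:ℝ) δ, ENNReal.ofReal t * η (Ici t) ∂volume with hAδdef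
  have hAδtop : Aδ ≠ ⊤ :=
    ne_top_of_le_ne_top hA1 (lintegral_mono_set (Ioo_subset_Ioo_right hδ1))
  set Bδ := ∫⁻ t in Ici δ, η (Ici t) ∂volume with hBδdef
  have hBδtop : Bδ ≠ ⊤ := B_fin hK hδ0
  set a := Aδ.toReal with hadef
  set b := Bδ.toReal with hbdef
  have hann : 0 ≤ a := ENNReal.toReal_nonneg
  have hbnn : 0 ≤ b := ENNReal.toReal_nonneg
  have hxev := x_div_phi_small hΦpos hΦmono hint (show (0:ℝ) < ε / (2 * (b + 1)) by positivity)
  filter_upwards [hCev, hxev, eventually_mem_nhdsWithin] with x hxC hxφ hxmem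
  have hx : 0 < x := hxmem
  have hΦx := hΦpos x hx
  have key := fun {u : ℝ} (hu : 0 < u) => key_ineq hΦpos hΦmono hΦconc hD hDanti hDnn hx hu
  have hmble : AEStronglyMeasurable
      (fun u => (η (Ici u)).toReal * (1 / Φ x - 1 / Φ (x + u)))
      (volume.restrict (Ioi 0)) := by
    have m1 : Measurable fun u : ℝ => (η (Ici u)).toReal := (eta_mble η).ennreal_toReal
    have c2 : ContinuousOn (fun u : ℝ => 1 / Φ (x + u)) (Ioi 0) := by
      intro u hu
      have hxu : 0 < x + u := by have := mem_Ioi.1 hu; linarith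
      have hc : ContinuousAt (fun u : ℝ => Φ (x + u)) u :=
        (hD _ hxu).continuousAt.comp ((continuous_const.add continuous_id).continuousAt)
      exact (continuousAt_const.div hc (ne_of_gt (hΦpos _ hxu))).continuousWithinAt
    have m2 : AEMeasurable (fun u : ℝ => 1 / Φ x - 1 / Φ (x + u)) (volume.restrict (Ioi 0)) :=
      aemeasurable_const.sub (c2.aemeasurable measurableSet_Ioi)
    exact (m1.aemeasurable.mul m2).aestronglyMeasurable
  have hnnae : 0 ≤ᵐ[volume.restrict (Ioi (0:ℝ))]
      fun u => (η (Ici u)).toReal * (1 / Φ x - 1 / Φ (x + u)) := by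
    filter_upwards [ae_restrict_mem measurableSet_Ioi] with u hu
    exact mul_nonneg ENNReal.toReal_nonneg (key hu).1
  have heq : ∫ u in Ioi (0:ℝ), (η (Ici u)).toReal * (1 / Φ x - 1 / Φ (x + u))
      = (∫⁻ u in Ioi (0:ℝ),
          ENNReal.ofReal ((η (Ici u)).toReal * (1 / Φ x - 1 / Φ (x + u)))).toReal :=
    integral_eq_lintegral_of_nonneg_ae hnnae hmble
  have hsplit : Ioo (0:ℝ) δ ∪ Ici δ = Ioi 0 := Ioo_union_Ici_eq_Ioi hδ0
  have hdisj : Disjoint (Ioo (0:ℝ) δ) (Ici δ) :=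
    disjoint_left.2 fun u hu hu' => absurd hu.2 (not_lt.2 hu')
  have hL : (∫⁻ u in Ioi (0:ℝ),
        ENNReal.ofReal ((η (Ici u)).toReal * (1 / Φ x - 1 / Φ (x + u))))
      ≤ Aδ * ENNReal.ofReal (D x / Φ x ^ 2) + Bδ * ENNReal.ofReal (1 / Φ x) := by
    rw [← hsplit, lintegral_union measurableSet_Ici hdisj]
    refine add_le_add ?_ ?_
    · calc ∫⁻ u in Ioo (0:ℝ) δ,
            ENNReal.ofReal ((η (Ici u)).toReal * (1 / Φ x - 1 / Φ (x + u)))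
          ≤ ∫⁻ u in Ioo (0:ℝ) δ,
              (ENNReal.ofReal u * η (Ici u)) * ENNReal.ofReal (D x / Φ x ^ 2) := by
            refine lintegral_mono_ae ?_
            filter_upwards [ae_restrict_mem measurableSet_Ioo] with u hu
            have hu0 : 0 < u := hu.1
            rw [ENNReal.ofReal_mul ENNReal.toReal_nonneg, ENNReal.ofReal_toReal (hfin hu0)]
            calc η (Ici u) * ENNReal.ofReal (1 / Φ x - 1 / Φ (x + u))
                ≤ η (Ici u) * (ENNReal.ofReal u * ENNReal.ofReal (D x / Φ x ^ 2)) := by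
                  refine mul_le_mul_right ?_ _
                  rw [← ENNReal.ofReal_mul hu0.le]
                  exact ENNReal.ofReal_le_ofReal (key hu0).2.1
              _ = (ENNReal.ofReal u * η (Ici u)) * ENNReal.ofReal (D x / Φ x ^ 2) := by
                  ring
        _ = Aδ * ENNReal.ofReal (D x / Φ x ^ 2) :=
            lintegral_mul_const _
              ((ENNReal.measurable_ofReal.comp measurable_id).mul (eta_mble η))
    · calc ∫⁻ u in Ici δ,
            ENNReal.ofReal ((η (Ici u)).toReal * (1 / Φ x - 1 / Φ (x + u)))
          ≤ ∫⁻ u in Ici δ, η (Ici u) * ENNReal.ofReal (1 / Φ x) := by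
            refine lintegral_mono_ae ?_
            filter_upwards [ae_restrict_mem measurableSet_Ici] with u hu
            have hu0 : 0 < u := lt_of_lt_of_le hδ0 hu
            rw [ENNReal.ofReal_mul ENNReal.toReal_nonneg, ENNReal.ofReal_toReal (hfin hu0)]
            exact mul_le_mul_right (ENNReal.ofReal_le_ofReal (key hu0).2.2) _
        _ = Bδ * ENNReal.ofReal (1 / Φ x) := lintegral_mul_const _ (eta_mble η)
  have hRtop : Aδ * ENNReal.ofReal (D x / Φ x ^ 2) + Bδ * ENNReal.ofReal (1 / Φ x) ≠ ⊤ :=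
    ENNReal.add_ne_top.2 ⟨ENNReal.mul_ne_top hAδtop ENNReal.ofReal_ne_top,
      ENNReal.mul_ne_top hBδtop ENNReal.ofReal_ne_top⟩
  have h1 : (∫⁻ u in Ioi (0:ℝ),
        ENNReal.ofReal ((η (Ici u)).toReal * (1 / Φ x - 1 / Φ (x + u)))).toReal
      ≤ a * (D x / Φ x ^ 2) + b * (1 / Φ x) := by
    have h2 := ENNReal.toReal_mono hRtop hL
    rwa [ENNReal.toReal_add (ENNReal.mul_ne_top hAδtop ENNReal.ofReal_ne_top)
        (ENNReal.mul_ne_top hBδtop ENNReal.ofReal_ne_top),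
      ENNReal.toReal_mul, ENNReal.toReal_mul,
      ENNReal.toReal_ofReal (div_nonneg (hDnn hx) (by positivity)),
      ENNReal.toReal_ofReal (by positivity : (0:ℝ) ≤ 1 / Φ x)] at h2
  have hmain : x * ∫ u in Ioi (0:ℝ), (η (Ici u)).toReal * (1 / Φ x - 1 / Φ (x + u))
      ≤ a * (x * D x / Φ x ^ 2) + b * (x / Φ x) := by
    rw [heq]
    calc x * (∫⁻ u in Ioi (0:ℝ),
          ENNReal.ofReal ((η (Ici u)).toReal * (1 / Φ x - 1 / Φ (x + u)))).toReal
        ≤ x * (a * (D x / Φ x ^ 2) + b * (1 / Φ x)) :=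
          mul_le_mul_of_nonneg_left h1 hx.le
      _ = a * (x * D x / Φ x ^ 2) + b * (x / Φ x) := by ring
  have hb1 : a * (x * D x / Φ x ^ 2) ≤ ε / 2 := by
    calc a * (x * D x / Φ x ^ 2) ≤ a * C' := by
          refine mul_le_mul_of_nonneg_left hxC hann
      _ ≤ ε / (2 * (C' + 1)) * C' := mul_le_mul_of_nonneg_right hAδ hC'nn
      _ ≤ ε / 2 := by
          rw [div_mul_eq_mul_div, div_le_div_iff₀ (by positivity) (by norm_num)]
          nlinarith
  have hb2 : b * (x / Φ x) ≤ ε / 2 := by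
    calc b * (x / Φ x) ≤ b * (ε / (2 * (b + 1))) := mul_le_mul_of_nonneg_left hxφ.le hbnn
      _ ≤ ε / 2 := by
          rw [← mul_div_assoc, div_le_div_iff₀ (by positivity) (by norm_num)]
          nlinarith
  linarith [hmain, hb1, hb2]

/-- If `Φ̂` is a Bernstein function with `∫_0^1 du/Φ̂(u) < ∞` and
`limsup_{x→0⁺} x Φ̂'(x)/Φ̂(x)² < ∞`, then
`limsup_{x→0⁺} x ∫₀^∞ η̄(u)(1/Φ̂(x) − 1/Φ̂(x+u)) du = 0`. -/
theorem stmt17 (Φ D : ℝ → ℝ) (η : Measure ℝ)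
    (hΦpos : ∀ x > (0:ℝ), 0 < Φ x) (hΦmono : MonotoneOn Φ (Ici 0))
    (hΦconc : ConcaveOn ℝ (Ici 0) Φ)
    (hD : ∀ x > (0:ℝ), HasDerivAt Φ (D x) x)
    (hη : ∫⁻ u in Ioi (0:ℝ), ENNReal.ofReal (min u (u ^ 2)) ∂η ≠ ⊤)
    (hint : IntegrableOn (fun u => 1 / Φ u) (Ioo 0 1))
    (hbdd : ∃ C : ℝ, ∀ᶠ x in 𝓝[>] (0:ℝ), x * D x / (Φ x) ^ 2 ≤ C) :
    Filter.limsup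
      (fun x => x * ∫ u in Ioi (0:ℝ), (η (Ici u)).toReal * (1 / Φ x - 1 / Φ (x + u)))
      (𝓝[>] (0:ℝ)) = 0 := by
  set F : ℝ → ℝ :=
    fun x => x * ∫ u in Ioi (0:ℝ), (η (Ici u)).toReal * (1 / Φ x - 1 / Φ (x + u)) with hF
  have hDnn : ∀ {x : ℝ}, 0 < x → 0 ≤ D x := fun hx => D_nonneg hΦmono hΦconc hD hx
  have hDanti : ∀ {x y : ℝ}, 0 < x → x ≤ y → D y ≤ D x := fun hx hxy => D_anti hΦconc hD hx hxy
  have hFle : ∀ ε : ℝ, 0 < ε → ∀ᶠ x in 𝓝[>] (0:ℝ), F x ≤ ε := fun ε hε =>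
    main_ev hΦpos hΦmono hΦconc hD hη hint hbdd hε
  have hFnnEv : ∀ᶠ x in 𝓝[>] (0:ℝ), 0 ≤ F x := by
    filter_upwards [eventually_mem_nhdsWithin] with x hx
    have hx0 : 0 < x := hx
    refine mul_nonneg hx0.le ?_
    refine setIntegral_nonneg measurableSet_Ioi fun u hu => ?_
    exact mul_nonneg ENNReal.toReal_nonneg
      (key_ineq hΦpos hΦmono hΦconc hD hDanti hDnn hx0 hu).1
  refine le_antisymm ?_ ?_
  · by_contra hcon
    push_neg at hcon
    have h2 : limsup F (𝓝[>] (0:ℝ)) ≤ limsup F (𝓝[>] (0:ℝ)) / 2 :=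
      limsup_le_of_le (isCoboundedUnder_le_of_eventually_le _ hFnnEv)
        (hFle _ (by linarith))
    linarith
  · exact le_limsup_of_frequently_le hFnnEv.frequently
      (isBoundedUnder_of_eventually_le (hFle 1 one_pos))
end
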